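/- arXiv:2405.03610 — 4 statements merged into one kernel-verified Lean document; each statement's English description precedes it below -/
import Mathlib

section
/- Let (T^•, δ^•) and (U^•, ε^•) be cohomological functors from C to D and let Φ^0 : T^0 → U^0 be a natural transformation. Suppose that for every short exact sequence 0 → K → P → M → 0 in C with P projective and every n ∈ ℕ, the sequence 0 → U^{-n-1}(M) → U^{-n}(K) given by the connecting homomorphism is exact (i.e. the connecting homomorphism ε^{-n-1} : U^{-n-1}(M) → U^{-n}(K) is a monomorphism). Then Φ^0 extends uniquely to a family of natural transformations (Φ^n : T^n → U^n)_{n ≤ 0} commuting with the connecting homomorphisms in all degrees n ≤ 0. Moreover, if T^• also satisfies the above monomorphism condition and Φ^0 is a natural isomorphism, then every Φ^n (n ≤ 0) is a natural isomorphism. -/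
open CategoryTheory Category Limits

universe v u v' u'

namespace Mislin

variable (C : Type u) [Category.{v} C] [Abelian C]
variable (D : Type u') [Category.{v'} D] [Abelian D]

/-- A cohomological functor `(T^•, δ^•) : C ⥤ D` (Axioms 2.1–2.2 of the paper):
a family of additive functors together with connecting homomorphisms, natural with respect
to morphisms of short exact sequences, inducing long exact sequences. -/
structure CohomFunctor where
  T : ℤ → C ⥤ D
  additive : ∀ n, (T n).Additive
  δ : ∀ {X : ShortComplex C}, X.ShortExact → ∀ n : ℤ, (T n).obj X.X₃ ⟶ (T (n + 1)).obj X.X₁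
  δ_natural : ∀ {X Y : ShortComplex C} (hX : X.ShortExact) (hY : Y.ShortExact)
    (φ : X ⟶ Y) (n : ℤ),
    (T n).map φ.τ₃ ≫ δ hY n = δ hX n ≫ (T (n + 1)).map φ.τ₁
  zero₁ : ∀ {X : ShortComplex C}, X.ShortExact → ∀ n : ℤ,
    (T n).map X.f ≫ (T n).map X.g = 0
  zero₂ : ∀ {X : ShortComplex C} (hX : X.ShortExact) (n : ℤ),
    (T n).map X.g ≫ δ hX n = 0
  zero₃ : ∀ {X : ShortComplex C} (hX : X.ShortExact) (n : ℤ),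
    δ hX n ≫ (T (n + 1)).map X.f = 0
  exact₁ : ∀ {X : ShortComplex C} (hX : X.ShortExact) (n : ℤ),
    (ShortComplex.mk ((T n).map X.f) ((T n).map X.g) (zero₁ hX n)).Exact
  exact₂ : ∀ {X : ShortComplex C} (hX : X.ShortExact) (n : ℤ),
    (ShortComplex.mk ((T n).map X.g) (δ hX n) (zero₂ hX n)).Exact
  exact₃ : ∀ {X : ShortComplex C} (hX : X.ShortExact) (n : ℤ),
    (ShortComplex.mk (δ hX n) ((T (n + 1)).map X.f) (zero₃ hX n)).Exact

variable {C D}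

/-- A morphism of cohomological functors (Axiom 2.3). -/
structure CohomHom (T U : CohomFunctor C D) where
  app : ∀ n : ℤ, T.T n ⟶ U.T n
  comm : ∀ {X : ShortComplex C} (hX : X.ShortExact) (n : ℤ),
    (app n).app X.X₃ ≫ U.δ hX n = T.δ hX n ≫ (app (n + 1)).app X.X₁

/-- Composition of morphisms of cohomological functors. -/
def CohomHom.comp {T U V : CohomFunctor C D} (f : CohomHom T U) (g : CohomHom U V) :
    CohomHom T V where
  app n := f.app n ≫ g.app n
  comm hX n := by
    simp only [NatTrans.comp_app, Category.assoc]
    rw [g.comm hX n, ← Category.assoc, f.comm hX n, Category.assoc]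

/-- A cohomological functor vanishes on projectives if `T^n(P) = 0` for all projective `P`
and all `n ∈ ℤ`. -/
def VanishesOnProjectives (T : CohomFunctor C D) : Prop :=
  ∀ (n : ℤ) (P : C), Projective P → IsZero ((T.T n).obj P)

/-- `(T̂^•, δ̂^•)` together with `ν : T^• → T̂^•` is a Mislin completion of `(T^•, δ^•)`
(Definition 2.4): it vanishes on projectives and every morphism to a cohomological functor
vanishing on projectives factors uniquely through `ν`. -/
structure IsMislinCompletion (T That : CohomFunctor C D) (ν : CohomHom T That) : Prop where
  vanishes : VanishesOnProjectives That
  factors : ∀ (U : CohomFunctor C D), VanishesOnProjectives U → ∀ φ : CohomHom T U,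
    ∃! ψ : CohomHom That U, ν.comp ψ = φ

/-- The elementary universal property for a colimit (direct limit) of an `ℕ`-indexed
direct system in `D`. -/
structure IsDirectLimit {X : ℕ → D} (f : ∀ k, X k ⟶ X (k + 1)) (L : D)
    (ι : ∀ k, X k ⟶ L) : Prop where
  comm : ∀ k, f k ≫ ι (k + 1) = ι k
  desc : ∀ (Z : D) (g : ∀ k, X k ⟶ Z), (∀ k, f k ≫ g (k + 1) = g k) →
    ∃! u : L ⟶ Z, ∀ k, ι k ≫ u = g k

/-- An abstract system of left satellite functors `S^{-k}T^n` of a cohomological functor `T`,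
in the sense of Cartan–Eilenberg, together with the connecting homomorphisms `ε`, the
factorisation `δ̲` of `δ` through the first left satellite, and its satellites `S^{-k}δ̲`.
Here `S k n` plays the role of `S^{-k}T^n`. -/
structure SatelliteSystem (T : CohomFunctor C D) where
  S : ℕ → ℤ → C ⥤ D
  additive : ∀ k n, (S k n).Additive
  S_zero : ∀ n, S 0 n = T.T n
  /-- connecting homomorphisms of satellite functors, `ε^{-k-1} : S^{-k-1}T^n(X₃) ⟶ S^{-k}T^n(X₁)`. -/
  ε : ∀ {X : ShortComplex C}, X.ShortExact → ∀ (k : ℕ) (n : ℤ),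
    (S (k + 1) n).obj X.X₃ ⟶ (S k n).obj X.X₁
  ε_natural : ∀ {X Y : ShortComplex C} (hX : X.ShortExact) (hY : Y.ShortExact)
    (φ : X ⟶ Y) (k : ℕ) (n : ℤ),
    (S (k + 1) n).map φ.τ₃ ≫ ε hY k n = ε hX k n ≫ (S k n).map φ.τ₁
  /-- higher left satellite functors vanish on projective objects. -/
  vanish : ∀ (k : ℕ) (n : ℤ) (P : C), Projective P → IsZero ((S (k + 1) n).obj P)
  sz₁ : ∀ {X : ShortComplex C}, X.ShortExact → ∀ (k : ℕ) (n : ℤ),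
    (S k n).map X.f ≫ (S k n).map X.g = 0
  sz₂ : ∀ {X : ShortComplex C} (hX : X.ShortExact) (k : ℕ) (n : ℤ),
    (S (k + 1) n).map X.g ≫ ε hX k n = 0
  sz₃ : ∀ {X : ShortComplex C} (hX : X.ShortExact) (k : ℕ) (n : ℤ),
    ε hX k n ≫ (S k n).map X.f = 0
  sexact₁ : ∀ {X : ShortComplex C} (hX : X.ShortExact) (k : ℕ) (n : ℤ),
    (ShortComplex.mk ((S k n).map X.f) ((S k n).map X.g) (sz₁ hX k n)).Exact
  sexact₂ : ∀ {X : ShortComplex C} (hX : X.ShortExact) (k : ℕ) (n : ℤ),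
    (ShortComplex.mk ((S (k + 1) n).map X.g) (ε hX k n) (sz₂ hX k n)).Exact
  sexact₃ : ∀ {X : ShortComplex C} (hX : X.ShortExact) (k : ℕ) (n : ℤ),
    (ShortComplex.mk (ε hX k n) ((S k n).map X.f) (sz₃ hX k n)).Exact
  /-- the natural transformations `S^{-k}δ̲^n : S^{-k}T^n → S^{-k-1}T^{n+1}`. -/
  Sδbar : ∀ (k : ℕ) (n : ℤ), S k n ⟶ S (k + 1) (n + 1)
  /-- `δ^n` factors as `δ̲^n` followed by `ε^{-1}` (Diagram 3.4 of the paper). -/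
  δ_fac : ∀ {X : ShortComplex C} (hX : X.ShortExact) (n : ℤ),
    T.δ hX n =
      eqToHom (congrArg (fun F : C ⥤ D => F.obj X.X₃) (S_zero n).symm) ≫
        (Sδbar 0 n).app X.X₃ ≫ ε hX 0 (n + 1) ≫
          eqToHom (congrArg (fun F : C ⥤ D => F.obj X.X₁) (S_zero (n + 1)))
  /-- the defining compatibility of `S^{-k-1}δ̲` with `S^{-k}δ̲` over the kernel
  monomorphisms `ε`, for short exact sequences with projective middle term. -/
  Sδbar_proj : ∀ {X : ShortComplex C} (hX : X.ShortExact), Projective X.X₂ →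
    ∀ (k : ℕ) (n : ℤ),
    (Sδbar (k + 1) n).app X.X₃ ≫ ε hX (k + 1) (n + 1) =
      ε hX k n ≫ (Sδbar k n).app X.X₁

theorem cast_step (n : ℤ) (k : ℕ) : n + (k : ℤ) + 1 = n + ((k + 1 : ℕ) : ℤ) := by
  push_cast; ring

/-- The `k`-th term `S^{-k}T^{n+k}(M)` of the direct system of the satellite functor
construction. -/
def SatelliteSystem.obj {T : CohomFunctor C D} (SS : SatelliteSystem T) (n : ℤ) (M : C)
    (k : ℕ) : D :=
  (SS.S k (n + (k : ℤ))).obj M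

/-- The transition morphism `S^{-k}δ̲^{n+k} : S^{-k}T^{n+k}(M) ⟶ S^{-k-1}T^{n+k+1}(M)` of the
direct system of the satellite functor construction. -/
def SatelliteSystem.map {T : CohomFunctor C D} (SS : SatelliteSystem T) (n : ℤ) (M : C)
    (k : ℕ) : SS.obj n M k ⟶ SS.obj n M (k + 1) :=
  (SS.Sδbar k (n + (k : ℤ))).app M ≫
    eqToHom (congrArg (fun m : ℤ => (SS.S (k + 1) m).obj M) (cast_step n k))

theorem obj_zero_eq {T : CohomFunctor C D} (SS : SatelliteSystem T) (n : ℤ) (M : C) :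
    (T.T n).obj M = SS.obj n M 0 := by
  show (T.T n).obj M = (SS.S 0 (n + ((0 : ℕ) : ℤ))).obj M
  rw [SS.S_zero]
  norm_num


section Statement0Aux

variable {C' : Type u} [Category.{v} C'] [Abelian C'] [EnoughProjectives C']
variable {D' : Type u'} [Category.{v'} D'] [Abelian D']

/-- canonical projective presentation of an object -/
noncomputable abbrev pres (M : C') : ShortComplex C' :=
  ShortComplex.mk (kernel.ι (Projective.π M)) (Projective.π M) (kernel.condition _)

lemma pres_shortExact (M : C') : (pres M).ShortExact :=
  ShortComplex.ShortExact.mk'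
    (ShortComplex.exact_of_f_is_kernel _ (kernelIsKernel (Projective.π M)))
    (by dsimp [pres]; infer_instance) (by dsimp [pres]; infer_instance)

lemma pres_proj (M : C') : Projective (pres M).X₂ := by
  dsimp [pres]; infer_instance

/-- a morphism of short exact sequences out of the canonical presentation -/
noncomputable def presHom {Y : ShortComplex C'} (hY : Y.ShortExact) {M : C'} (f : M ⟶ Y.X₃) :
    pres M ⟶ Y :=
  haveI := hY.mono_f
  haveI := hY.epi_g
  haveI : Projective (pres M).X₂ := pres_proj M
  { τ₂ := Projective.factorThru (Projective.π M ≫ f) Y.g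
    τ₃ := f
    τ₁ := hY.exact.lift (kernel.ι (Projective.π M) ≫
            Projective.factorThru (Projective.π M ≫ f) Y.g)
      (by rw [assoc, Projective.factorThru_comp, kernel.condition_assoc, zero_comp])
    comm₁₂ := hY.exact.lift_f _ _
    comm₂₃ := Projective.factorThru_comp _ _ }

@[simp] lemma presHom_τ₃ {Y : ShortComplex C'} (hY : Y.ShortExact) {M : C'} (f : M ⟶ Y.X₃) :
    (presHom hY f).τ₃ = f := rfl

lemma mono_of_le (V : CohomFunctor C' D')
    (hV : ∀ {X : ShortComplex C'} (hX : X.ShortExact), Projective X.X₂ →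
      ∀ n : ℕ, Mono (V.δ hX (-(n : ℤ) - 1)))
    {X : ShortComplex C'} (hX : X.ShortExact) (hP : Projective X.X₂)
    {m : ℤ} (hm : m ≤ -1) : Mono (V.δ hX m) := by
  obtain ⟨n, rfl⟩ : ∃ n : ℕ, m = -(n : ℤ) - 1 := ⟨(-m - 1).toNat, by omega⟩
  exact hV hX hP n

variable (T U : CohomFunctor C' D')

section Step

variable (n : ℤ)
  (hUn : ∀ {X : ShortComplex C'} (hX : X.ShortExact), Projective X.X₂ → Mono (U.δ hX n))
  (Ψ : T.T (n + 1) ⟶ U.T (n + 1))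

/-- the object-wise extension of `Ψ` one degree down, via the canonical presentation -/
noncomputable def stepApp (M : C') : (T.T n).obj M ⟶ (U.T n).obj M :=
  haveI : Mono (ShortComplex.mk (U.δ (pres_shortExact M) n)
      ((U.T (n + 1)).map (pres M).f) (U.zero₃ _ n)).f :=
    hUn (pres_shortExact M) (pres_proj M)
  (U.exact₃ (pres_shortExact M) n).lift
    (T.δ (pres_shortExact M) n ≫ Ψ.app (pres M).X₁)
    (by rw [assoc, ← Ψ.naturality, ← assoc, T.zero₃ (pres_shortExact M) n, zero_comp])

lemma stepApp_pres (M : C') :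
    stepApp T U n hUn Ψ M ≫ U.δ (pres_shortExact M) n =
      T.δ (pres_shortExact M) n ≫ Ψ.app (pres M).X₁ :=
  haveI : Mono (ShortComplex.mk (U.δ (pres_shortExact M) n)
      ((U.T (n + 1)).map (pres M).f) (U.zero₃ _ n)).f :=
    hUn (pres_shortExact M) (pres_proj M)
  (U.exact₃ (pres_shortExact M) n).lift_f _ _

lemma stepApp_comm {Y : ShortComplex C'} (hY : Y.ShortExact) :
    stepApp T U n hUn Ψ Y.X₃ ≫ U.δ hY n = T.δ hY n ≫ Ψ.app Y.X₁ := by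
  have hT : T.δ hY n = T.δ (pres_shortExact Y.X₃) n ≫
      (T.T (n + 1)).map (presHom hY (𝟙 Y.X₃)).τ₁ := by
    have h := T.δ_natural (pres_shortExact Y.X₃) hY (presHom hY (𝟙 Y.X₃)) n
    have e : (T.T n).map (presHom hY (𝟙 Y.X₃)).τ₃ ≫ T.δ hY n = T.δ hY n :=
      calc (T.T n).map (presHom hY (𝟙 Y.X₃)).τ₃ ≫ T.δ hY n
          = (T.T n).map (𝟙 Y.X₃) ≫ T.δ hY n := rfl
        _ = T.δ hY n := by rw [CategoryTheory.Functor.map_id, id_comp]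
    rw [e] at h
    exact h
  have hU2 : U.δ hY n = U.δ (pres_shortExact Y.X₃) n ≫
      (U.T (n + 1)).map (presHom hY (𝟙 Y.X₃)).τ₁ := by
    have h := U.δ_natural (pres_shortExact Y.X₃) hY (presHom hY (𝟙 Y.X₃)) n
    have e : (U.T n).map (presHom hY (𝟙 Y.X₃)).τ₃ ≫ U.δ hY n = U.δ hY n :=
      calc (U.T n).map (presHom hY (𝟙 Y.X₃)).τ₃ ≫ U.δ hY n
          = (U.T n).map (𝟙 Y.X₃) ≫ U.δ hY n := rfl
        _ = U.δ hY n := by rw [CategoryTheory.Functor.map_id, id_comp]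
    rw [e] at h
    exact h
  rw [hU2, hT, assoc, Ψ.naturality, ← assoc, stepApp_pres, assoc]

/-- the natural transformation extending `Ψ` one degree down -/
noncomputable def step : T.T n ⟶ U.T n where
  app M := stepApp T U n hUn Ψ M
  naturality M M' f := by
    haveI : Mono (U.δ (pres_shortExact M') n) := hUn (pres_shortExact M') (pres_proj M')
    rw [← cancel_mono (U.δ (pres_shortExact M') n)]
    have hT := T.δ_natural (pres_shortExact M) (pres_shortExact M')
      (presHom (pres_shortExact M') f) n
    have hU2 := U.δ_natural (pres_shortExact M) (pres_shortExact M')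
      (presHom (pres_shortExact M') f) n
    have eT : (T.T n).map (presHom (pres_shortExact M') f).τ₃ = (T.T n).map f := rfl
    have eU : (U.T n).map (presHom (pres_shortExact M') f).τ₃ = (U.T n).map f := rfl
    simp only [assoc]
    rw [stepApp_pres, ← eT, reassoc_of% hT, Ψ.naturality,
      ← reassoc_of% (stepApp_pres T U n hUn Ψ M), ← hU2, eU]

end Step

/-- transport of a natural transformation along an equality of degrees -/
def tw {m k : ℤ} (h : m = k) (φ : T.T m ⟶ U.T m) : T.T k ⟶ U.T k := h ▸ φ

lemma tw_self {m : ℤ} (h : m = m) (φ : T.T m ⟶ U.T m) : tw T U h φ = φ := rfl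

lemma tw_tw {m k l : ℤ} (h : m = k) (h' : k = l) (φ : T.T m ⟶ U.T m) :
    tw T U h' (tw T U h φ) = tw T U (h.trans h') φ := by subst h; subst h'; rfl

variable (hU' : ∀ {X : ShortComplex C'} (hX : X.ShortExact), Projective X.X₂ →
    ∀ n : ℕ, Mono (U.δ hX (-(n : ℤ) - 1))) (Φ0 : T.T 0 ⟶ U.T 0)

/-- the family `Φ^{-k}`, indexed by naturals -/
noncomputable def PhiNat : ∀ k : ℕ, (T.T (-(k : ℤ)) ⟶ U.T (-(k : ℤ)))
  | 0 => tw T U (by norm_num) Φ0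
  | (k + 1) => tw T U (show -(k : ℤ) - 1 = -((k + 1 : ℕ) : ℤ) by push_cast; ring)
      (step T U (-(k : ℤ) - 1)
        (fun {X} hX hP => mono_of_le U hU' hX hP (by omega))
        (tw T U (show -(k : ℤ) = -(k : ℤ) - 1 + 1 by ring) (PhiNat k)))

/-- the family `Φ^n` for `n ≤ 0` -/
noncomputable def Phi : ∀ n : ℤ, n ≤ 0 → (T.T n ⟶ U.T n) := fun n hn =>
  tw T U (show -(((-n).toNat : ℕ) : ℤ) = n by omega) (PhiNat T U hU' Φ0 (-n).toNat)

lemma tw_congr {j k : ℕ} {m : ℤ} (e : j = k) (hj : -(j : ℤ) = m) (hk : -(k : ℤ) = m) :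
    tw T U hj (PhiNat T U hU' Φ0 j) = tw T U hk (PhiNat T U hU' Φ0 k) := by
  subst e; rfl

lemma Phi_eq (n : ℤ) (hn : n ≤ 0) (k : ℕ) (h : -(k : ℤ) = n) :
    Phi T U hU' Φ0 n hn = tw T U h (PhiNat T U hU' Φ0 k) :=
  tw_congr T U hU' Φ0 (by omega) _ h

lemma Phi_zero (hn : (0 : ℤ) ≤ 0) : Phi T U hU' Φ0 0 hn = Φ0 := by
  rw [Phi_eq T U hU' Φ0 0 hn 0 (by norm_num)]
  rw [show PhiNat T U hU' Φ0 0 = tw T U (by norm_num) Φ0 from rfl, tw_tw]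
  rfl

lemma Phi_succ (k : ℕ) (hn : -(k : ℤ) - 1 ≤ 0) :
    Phi T U hU' Φ0 (-(k : ℤ) - 1) hn =
      step T U (-(k : ℤ) - 1)
        (fun {X} hX hP => mono_of_le U hU' hX hP (by omega))
        (tw T U (show -(k : ℤ) = -(k : ℤ) - 1 + 1 by ring) (PhiNat T U hU' Φ0 k)) := by
  rw [Phi_eq T U hU' Φ0 _ hn (k + 1) (by push_cast; ring)]
  rw [show PhiNat T U hU' Φ0 (k + 1) = tw T U
      (show -(k : ℤ) - 1 = -((k + 1 : ℕ) : ℤ) by push_cast; ring)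
      (step T U (-(k : ℤ) - 1)
        (fun {X} hX hP => mono_of_le U hU' hX hP (by omega))
        (tw T U (show -(k : ℤ) = -(k : ℤ) - 1 + 1 by ring) (PhiNat T U hU' Φ0 k))) from rfl,
    tw_tw]
  rfl

lemma Phi_comm {X : ShortComplex C'} (hX : X.ShortExact) (n : ℤ) (hn : n + 1 ≤ 0)
    (hn' : n ≤ 0) :
    (Phi T U hU' Φ0 n hn').app X.X₃ ≫ U.δ hX n =
      T.δ hX n ≫ (Phi T U hU' Φ0 (n + 1) hn).app X.X₁ := by
  obtain ⟨k, rfl⟩ : ∃ k : ℕ, n = -(k : ℤ) - 1 := ⟨(-(n + 1)).toNat, by omega⟩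
  rw [Phi_succ T U hU' Φ0 k hn']
  rw [Phi_eq T U hU' Φ0 _ hn k (by ring)]
  exact stepApp_comm T U (-(k : ℤ) - 1)
    (fun {X} hX hP => mono_of_le U hU' hX hP (by omega))
    (tw T U (show -(k : ℤ) = -(k : ℤ) - 1 + 1 by ring) (PhiNat T U hU' Φ0 k)) hX

end Statement0Aux


/-- Lemma 3.1 / Cartan–Eilenberg III.5.2. Let `T`, `U` be cohomological
functors from `C` to `D` and `Φ⁰ : T⁰ → U⁰` a natural transformation. If for every short
exact sequence `0 → K → P → M → 0` with `P` projective and every `n ∈ ℕ` the connecting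
homomorphism `ε^{-n-1} : U^{-n-1}(M) → U^{-n}(K)` is a monomorphism, then `Φ⁰` extends
uniquely to a family of natural transformations `(Φⁿ : Tⁿ → Uⁿ)_{n ≤ 0}` commuting with the
connecting homomorphisms in all degrees `n ≤ 0`. If moreover `T` satisfies the same
monomorphism condition and `Φ⁰` is a natural isomorphism, then every `Φⁿ` (`n ≤ 0`) is a
natural isomorphism. -/
theorem extension_of_cohomological_functors
    {C : Type u} [Category.{v} C] [Abelian C] [EnoughProjectives C]
    {D : Type u'} [Category.{v'} D] [Abelian D]
    (T U : CohomFunctor C D) (Φ0 : T.T 0 ⟶ U.T 0)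
    (hU : ∀ {X : ShortComplex C} (hX : X.ShortExact), Projective X.X₂ →
      ∀ n : ℕ, Mono (U.δ hX (-(n : ℤ) - 1))) :
    (∃! Φ : ∀ n : ℤ, n ≤ 0 → (T.T n ⟶ U.T n),
      Φ 0 le_rfl = Φ0 ∧
      ∀ {X : ShortComplex C} (hX : X.ShortExact) (n : ℤ) (hn : n + 1 ≤ 0),
        (Φ n (by omega)).app X.X₃ ≫ U.δ hX n =
          T.δ hX n ≫ (Φ (n + 1) hn).app X.X₁) ∧
    ((∀ {X : ShortComplex C} (hX : X.ShortExact), Projective X.X₂ →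
        ∀ n : ℕ, Mono (T.δ hX (-(n : ℤ) - 1))) → IsIso Φ0 →
      ∀ Φ : ∀ n : ℤ, n ≤ 0 → (T.T n ⟶ U.T n),
        (Φ 0 le_rfl = Φ0 ∧
          ∀ {X : ShortComplex C} (hX : X.ShortExact) (n : ℤ) (hn : n + 1 ≤ 0),
            (Φ n (by omega)).app X.X₃ ≫ U.δ hX n =
              T.δ hX n ≫ (Φ (n + 1) hn).app X.X₁) →
        ∀ (n : ℤ) (hn : n ≤ 0), IsIso (Φ n hn)) := by
  constructor
  · refine ⟨fun n hn => Phi T U hU Φ0 n hn,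
      ⟨Phi_zero T U hU Φ0 le_rfl,
       fun {X} hX n hn => Phi_comm T U hU Φ0 hX n hn (by omega)⟩, ?_⟩
    rintro Φ' ⟨h0, hcomm⟩
    have main : ∀ k : ℕ, ∀ (n : ℤ) (hn : n ≤ 0), n = -(k : ℤ) →
        Φ' n hn = Phi T U hU Φ0 n hn := by
      intro k
      induction k with
      | zero =>
        intro n hn h
        obtain rfl : n = 0 := by omega
        exact h0.trans (Phi_zero T U hU Φ0 hn).symm
      | succ k ih =>
        intro n hn h
        have hn1 : n + 1 ≤ 0 := by omega
        ext M
        haveI : Mono (U.δ (pres_shortExact M) n) :=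
          mono_of_le U hU (pres_shortExact M) (pres_proj M) (by omega)
        rw [← cancel_mono (U.δ (pres_shortExact M) n)]
        calc (Φ' n hn).app M ≫ U.δ (pres_shortExact M) n
            = T.δ (pres_shortExact M) n ≫ (Φ' (n + 1) hn1).app (pres M).X₁ :=
              hcomm (pres_shortExact M) n hn1
          _ = T.δ (pres_shortExact M) n ≫
                (Phi T U hU Φ0 (n + 1) hn1).app (pres M).X₁ := by
              rw [ih (n + 1) hn1 (by omega)]
          _ = (Phi T U hU Φ0 n hn).app M ≫ U.δ (pres_shortExact M) n :=
              (Phi_comm T U hU Φ0 (pres_shortExact M) n hn1 hn).symm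
    funext n hn
    exact main (-n).toNat n hn (by omega)
  · rintro hT hiso Φ' ⟨h0, hcomm⟩
    have main : ∀ k : ℕ, ∀ (n : ℤ) (hn : n ≤ 0), n = -(k : ℤ) → IsIso (Φ' n hn) := by
      intro k
      induction k with
      | zero =>
        intro n hn h
        obtain rfl : n = 0 := by omega
        have e : Φ' 0 hn = Φ0 := h0
        rw [e]; exact hiso
      | succ k ih =>
        intro n hn h
        have hn1 : n + 1 ≤ 0 := by omega
        haveI : IsIso (Φ' (n + 1) hn1) := ih (n + 1) hn1 (by omega)
        have key : ∀ M : C, IsIso ((Φ' n hn).app M) := by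
          intro M
          have hX := pres_shortExact M
          haveI hmU : Mono (U.δ (pres_shortExact M) n) :=
            mono_of_le U hU (pres_shortExact M) (pres_proj M) (by omega)
          haveI hmT : Mono (T.δ (pres_shortExact M) n) :=
            mono_of_le T hT (pres_shortExact M) (pres_proj M) (by omega)
          haveI : Mono (ShortComplex.mk (T.δ (pres_shortExact M) n)
              ((T.T (n + 1)).map (pres M).f) (T.zero₃ (pres_shortExact M) n)).f := hmT
          set α := Φ' (n + 1) hn1 with hα
          set i := inv α with hi
          have hψ0 : (U.δ (pres_shortExact M) n ≫ i.app (pres M).X₁) ≫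
              (T.T (n + 1)).map (pres M).f = 0 := by
            rw [assoc, ← i.naturality, ← assoc, U.zero₃ (pres_shortExact M) n, zero_comp]
          set ψ := (T.exact₃ (pres_shortExact M) n).lift
            (U.δ (pres_shortExact M) n ≫ i.app (pres M).X₁) hψ0 with hψdef
          have hψ : ψ ≫ T.δ (pres_shortExact M) n =
              U.δ (pres_shortExact M) n ≫ i.app (pres M).X₁ :=
            (T.exact₃ (pres_shortExact M) n).lift_f _ _
          have hcomm' := hcomm (pres_shortExact M) n hn1
          have hai : ∀ Z : C, α.app Z ≫ i.app Z = 𝟙 _ := by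
            intro Z
            have h := congr_app (IsIso.hom_inv_id α) Z
            rw [NatTrans.comp_app, NatTrans.id_app] at h
            exact h
          have hia : ∀ Z : C, i.app Z ≫ α.app Z = 𝟙 _ := by
            intro Z
            have h := congr_app (IsIso.inv_hom_id α) Z
            rw [NatTrans.comp_app, NatTrans.id_app] at h
            exact h
          have h1 : (Φ' n hn).app (pres M).X₃ ≫ ψ = 𝟙 _ := by
            rw [← cancel_mono (T.δ (pres_shortExact M) n), assoc, hψ, id_comp,
              ← assoc, hcomm', assoc, hai, comp_id]
          have h2 : ψ ≫ (Φ' n hn).app (pres M).X₃ = 𝟙 _ := by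
            rw [← cancel_mono (U.δ (pres_shortExact M) n), assoc, hcomm', id_comp,
              ← assoc, hψ, assoc, hia, comp_id]
          exact ⟨⟨ψ, h1, h2⟩⟩
        haveI := key
        exact NatIso.isIso_of_isIso_app _
    intro n hn
    exact main (-n).toNat n hn (by omega)


end Mislin
end

section
/- The isomorphisms ω_n : T̂^n → T_Res^n form a natural isomorphism: for every morphism f : M → N in C and every n ∈ ℤ, the square with horizontal maps ω_n(M) and ω_n(N) and vertical maps T̂^n(f) and T_Res^n(f) commutes, where T_Res^n(f) := colim_{k ∈ ℕ₀} T^{n+k}(f̃_k) for any sequence of lifts (f̃_k : M̃_k → Ñ_k)_{k ∈ ℕ₀} of f between syzygies. In particular, T_Res^n(f) does not depend on the choices of projective resolutions and lifts. -/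
open CategoryTheory Category Limits

universe v u v' u'

namespace Mislin

variable (C : Type u) [Category.{v} C] [Abelian C]
variable (D : Type u') [Category.{v'} D] [Abelian D]

variable {C D}

/-- A projective resolution of `M` presented through its syzygies: short exact sequences
`0 → M̃_{k+1} → P_k → M̃_k → 0` with `P_k` projective and `M̃_0 = M`. -/
structure SyzygySequence (M : C) where
  Mt : ℕ → C
  Mt_zero : Mt 0 = M
  P : ℕ → C
  projP : ∀ k, Projective (P k)
  ι : ∀ k, Mt (k + 1) ⟶ P k
  π : ∀ k, P k ⟶ Mt k
  w : ∀ k, ι k ≫ π k = 0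
  shortExact : ∀ k, (ShortComplex.mk (ι k) (π k) (w k)).ShortExact

/-- The `k`-th term `T^{n+k}(M̃_k)` of the direct system of the resolution construction. -/
def resObj (T : CohomFunctor C D) {M : C} (R : SyzygySequence M) (n : ℤ) (k : ℕ) : D :=
  (T.T (n + (k : ℤ))).obj (R.Mt k)

/-- The transition morphism `δ^{n+k} : T^{n+k}(M̃_k) ⟶ T^{n+k+1}(M̃_{k+1})` of the direct
system of the resolution construction. -/
def resMap (T : CohomFunctor C D) {M : C} (R : SyzygySequence M) (n : ℤ) (k : ℕ) :
    resObj T R n k ⟶ resObj T R n (k + 1) :=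
  T.δ (R.shortExact k) (n + (k : ℤ)) ≫
    eqToHom (congrArg (fun m : ℤ => (T.T m).obj (R.Mt (k + 1))) (cast_step n k))

/-- The composite of the kernel monomorphisms `ε` taking `S^{-k}T^m(M̃_j)` to
`T^m(M̃_{j+k})` (the morphisms `õ^k`, `o^k` from the proof of Lemma 4.1). -/
def oeps {T : CohomFunctor C D} (SS : SatelliteSystem T) {M : C} (R : SyzygySequence M)
    (m : ℤ) : (k j : ℕ) → ((SS.S k m).obj (R.Mt j) ⟶ (T.T m).obj (R.Mt (j + k)))
  | 0, j => eqToHom (by rw [SS.S_zero]; rfl)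
  | k + 1, j =>
      SS.ε (R.shortExact j) k m ≫ oeps SS R m k (j + 1) ≫
        eqToHom (congrArg (fun i => (T.T m).obj (R.Mt i))
          (show (j + 1) + k = j + (k + 1) by omega))

/-- The component `o^k ∘ ε^{-1}`-style morphism from the satellite system to the resolution
system, out of which `ω_n(M)` is built. -/
def omegaComp {T : CohomFunctor C D} (SS : SatelliteSystem T) {M : C}
    (R : SyzygySequence M) (n : ℤ) (k : ℕ) : SS.obj n M k ⟶ resObj T R n k :=
  eqToHom (congrArg ((SS.S k (n + (k : ℤ))).obj) R.Mt_zero.symm) ≫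
    oeps SS R (n + (k : ℤ)) k 0 ≫
      eqToHom (congrArg (fun i => (T.T (n + (k : ℤ))).obj (R.Mt i)) (Nat.zero_add k))

/-- A lift of a morphism `f : M ⟶ N` to the syzygies of chosen projective resolutions
(Definition 4.3). -/
structure SyzygyLift {M N : C} (f : M ⟶ N) (RM : SyzygySequence M)
    (RN : SyzygySequence N) where
  ft : ∀ k, RM.Mt k ⟶ RN.Mt k
  fP : ∀ k, RM.P k ⟶ RN.P k
  ft_zero : ft 0 = eqToHom RM.Mt_zero ≫ f ≫ eqToHom RN.Mt_zero.symm
  comm_ι : ∀ k, RM.ι k ≫ fP k = ft (k + 1) ≫ RN.ι k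
  comm_π : ∀ k, RM.π k ≫ ft k = fP k ≫ RN.π k

/-- Horseshoe-Lemma-compatible projective resolutions of the terms of a short exact sequence
`0 → A → B → C → 0`, with short exact sequences of syzygies `0 → Ã_k → B̃_k → C̃_k → 0`
(Diagram 4.9). -/
structure HorseshoeData {X : ShortComplex C} (hX : X.ShortExact) where
  RA : SyzygySequence X.X₁
  RB : SyzygySequence X.X₂
  RC : SyzygySequence X.X₃
  f : ∀ k, RA.Mt k ⟶ RB.Mt k
  g : ∀ k, RB.Mt k ⟶ RC.Mt k
  w : ∀ k, f k ≫ g k = 0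
  shortExact : ∀ k, (ShortComplex.mk (f k) (g k) (w k)).ShortExact
  f_zero : f 0 = eqToHom RA.Mt_zero ≫ X.f ≫ eqToHom RB.Mt_zero.symm
  g_zero : g 0 = eqToHom RB.Mt_zero ≫ X.g ≫ eqToHom RC.Mt_zero.symm
  fP : ∀ k, RA.P k ⟶ RB.P k
  gP : ∀ k, RB.P k ⟶ RC.P k
  wP : ∀ k, fP k ≫ gP k = 0
  shortExactP : ∀ k, (ShortComplex.mk (fP k) (gP k) (wP k)).ShortExact
  comm_fι : ∀ k, RA.ι k ≫ fP k = f (k + 1) ≫ RB.ι k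
  comm_fπ : ∀ k, RA.π k ≫ f k = fP k ≫ RB.π k
  comm_gι : ∀ k, RB.ι k ≫ gP k = g (k + 1) ≫ RC.ι k
  comm_gπ : ∀ k, RB.π k ≫ g k = gP k ≫ RC.π k

set_option linter.unusedSectionVars false

section Helpers

variable {C : Type u} [Category.{v} C] [Abelian C]
variable {D : Type u'} [Category.{v'} D] [Abelian D]

theorem IsDirectLimit.hom_ext {X : ℕ → D} {f : ∀ k, X k ⟶ X (k + 1)} {L : D}
    {ι : ∀ k, X k ⟶ L} (h : IsDirectLimit f L ι) {Z : D} {a b : L ⟶ Z}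
    (hab : ∀ k, ι k ≫ a = ι k ≫ b) : a = b := by
  obtain ⟨u, -, huniq⟩ := h.desc Z (fun k => ι k ≫ a)
    (fun k => by rw [← Category.assoc, h.comm])
  exact (huniq a fun k => rfl).trans (huniq b fun k => (hab k).symm).symm

variable {T : CohomFunctor C D} (SS : SatelliteSystem T)

theorem isZero_S {k : ℕ} (hk : k ≠ 0) (m : ℤ) {P : C} (hP : Projective P) :
    IsZero ((SS.S k m).obj P) := by
  obtain ⟨k, rfl⟩ := Nat.exists_eq_succ_of_ne_zero hk
  exact SS.vanish k m P hP

theorem isIso_eps {X : ShortComplex C} (hX : X.ShortExact) (hP : Projective X.X₂)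
    (k : ℕ) (m : ℤ) : IsIso (SS.ε hX (k + 1) m) := by
  have hmono : Mono (SS.ε hX (k + 1) m) :=
    (SS.sexact₂ hX (k + 1) m).mono_g ((isZero_S SS (k := k + 2) (by omega) m hP).eq_of_src _ _)
  have hepi : Epi (SS.ε hX (k + 1) m) :=
    (SS.sexact₃ hX (k + 1) m).epi_f ((isZero_S SS (k := k + 1) (by omega) m hP).eq_of_tgt _ _)
  exact isIso_of_mono_of_epi _

theorem natTrans_eqToHom {F G : C ⥤ D} (α : F ⟶ G) {X Y : C} (h : X = Y) :
    eqToHom (congrArg F.obj h) ≫ α.app Y = α.app X ≫ eqToHom (congrArg G.obj h) := by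
  subst h; simp

variable {M : C} (R : SyzygySequence M)

theorem eps0_reindex (m : ℤ) {i i' : ℕ} (h : i = i') :
    eqToHom (congrArg (fun a => (SS.S 1 m).obj (R.Mt a)) h) ≫ SS.ε (R.shortExact i') 0 m =
      SS.ε (R.shortExact i) 0 m ≫
        eqToHom (congrArg (fun a => (SS.S 0 m).obj (R.Mt (a + 1))) h) := by
  subst h; simp

theorem eps_congr {m m' : ℤ} (h : m = m') {X : ShortComplex C} (hX : X.ShortExact) (k : ℕ) :
    SS.ε hX k m = eqToHom (show (SS.S (k + 1) m).obj X.X₃ = (SS.S (k + 1) m').obj X.X₃ by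
        rw [h]) ≫ SS.ε hX k m' ≫
      eqToHom (show (SS.S k m').obj X.X₁ = (SS.S k m).obj X.X₁ by rw [h]) := by
  subst h; simp

/-- The composite of the kernel monomorphisms `ε` stopping at satellite degree 1. -/
def oe1 (m : ℤ) : ∀ (k j : ℕ), (SS.S (k + 1) m).obj (R.Mt j) ⟶ (SS.S 1 m).obj (R.Mt (j + k))
  | 0, _ => 𝟙 _
  | k + 1, j =>
      SS.ε (R.shortExact j) (k + 1) m ≫ oe1 m k (j + 1) ≫
        eqToHom (congrArg (fun i => (SS.S 1 m).obj (R.Mt i))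
          (show (j + 1) + k = j + (k + 1) by omega))

instance isIso_oe1 (m : ℤ) (k j : ℕ) : IsIso (oe1 SS R m k j) := by
  induction k generalizing j with
  | zero => rw [oe1]; infer_instance
  | succ k ih =>
      rw [oe1]
      have h1 : IsIso (SS.ε (R.shortExact j) (k + 1) m) :=
        isIso_eps SS (R.shortExact j) (R.projP j) k m
      have h2 := ih (j + 1)
      infer_instance

theorem oe1_congr {m m' : ℤ} (h : m = m') (k j : ℕ) :
    oe1 SS R m k j = eqToHom (show (SS.S (k + 1) m).obj (R.Mt j) =
        (SS.S (k + 1) m').obj (R.Mt j) by rw [h]) ≫ oe1 SS R m' k j ≫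
      eqToHom (show (SS.S 1 m').obj (R.Mt (j + k)) = (SS.S 1 m).obj (R.Mt (j + k)) by
        rw [h]) := by
  subst h; simp

theorem oeps_eq (m : ℤ) (k j : ℕ) :
    oeps SS R m (k + 1) j = oe1 SS R m k j ≫ SS.ε (R.shortExact (j + k)) 0 m ≫
      eqToHom (by rw [SS.S_zero] :
        (SS.S 0 m).obj (R.Mt (j + (k + 1))) = (T.T m).obj (R.Mt (j + (k + 1)))) := by
  induction k generalizing j with
  | zero => simp [oeps, oe1, eqToHom_trans]
  | succ k ih =>
      rw [show oeps SS R m (k + 1 + 1) j = SS.ε (R.shortExact j) (k + 1) m ≫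
          oeps SS R m (k + 1) (j + 1) ≫
          eqToHom (congrArg (fun i => (T.T m).obj (R.Mt i))
            (show (j + 1) + (k + 1) = j + (k + 1 + 1) by omega)) from rfl]
      rw [ih (j + 1), oe1]
      simp only [Category.assoc]
      congr 2
      rw [← Category.assoc (eqToHom _), eps0_reindex SS R m
        (show (j + 1) + k = j + (k + 1) by omega)]
      simp [eqToHom_trans]

theorem sdb_oe1 (m : ℤ) (k j : ℕ) :
    (SS.Sδbar k m).app (R.Mt j) ≫ oe1 SS R (m + 1) k j =
      oeps SS R m k j ≫
        eqToHom (by rw [SS.S_zero] :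
          (T.T m).obj (R.Mt (j + k)) = (SS.S 0 m).obj (R.Mt (j + k))) ≫
        (SS.Sδbar 0 m).app (R.Mt (j + k)) := by
  induction k generalizing j with
  | zero => simp [oeps, oe1, eqToHom_trans]
  | succ k ih =>
      rw [oe1]
      rw [← Category.assoc, SS.Sδbar_proj (R.shortExact j) (R.projP j) k m]
      rw [show oeps SS R m (k + 1) j = SS.ε (R.shortExact j) k m ≫
          oeps SS R m k (j + 1) ≫
          eqToHom (congrArg (fun i => (T.T m).obj (R.Mt i))
            (show (j + 1) + k = j + (k + 1) by omega)) from rfl]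
      simp only [Category.assoc]
      congr 1
      rw [← Category.assoc ((SS.Sδbar k m).app _), ih (j + 1)]
      simp only [Category.assoc]
      congr 1
      rw [← natTrans_eqToHom (SS.Sδbar 0 m)
        (congrArg R.Mt (show (j + 1) + k = j + (k + 1) by omega))]
      simp [eqToHom_trans]

end Helpers
section Beta

variable {C : Type u} [Category.{v} C] [Abelian C]
variable {D : Type u'} [Category.{v'} D] [Abelian D]
variable {T : CohomFunctor C D} (SS : SatelliteSystem T)
variable {M : C} (R : SyzygySequence M)

/-- The backwards interleaving map `T^{n+k}(M̃_k) ⟶ S^{-(k+1)}T^{n+k+1}(M)`. -/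
noncomputable def beta (n : ℤ) (k : ℕ) : resObj T R n k ⟶ SS.obj n M (k + 1) :=
  eqToHom (show (T.T (n + (k : ℤ))).obj (R.Mt k) =
      (SS.S 0 (n + (k : ℤ))).obj (R.Mt (0 + k)) by rw [SS.S_zero, Nat.zero_add]) ≫
    (SS.Sδbar 0 (n + (k : ℤ))).app (R.Mt (0 + k)) ≫
      inv (oe1 SS R (n + (k : ℤ) + 1) k 0) ≫
        eqToHom (show (SS.S (k + 1) (n + (k : ℤ) + 1)).obj (R.Mt 0) = SS.obj n M (k + 1) by
          rw [R.Mt_zero, cast_step n k]; rfl)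

theorem omega_beta (n : ℤ) (k : ℕ) :
    omegaComp SS R n k ≫ beta SS R n k = SS.map n M k := by
  unfold omegaComp beta SatelliteSystem.map SatelliteSystem.obj resObj
  simp only [Category.assoc, eqToHom_trans_assoc]
  rw [← reassoc_of% (sdb_oe1 SS R (n + (k : ℤ)) k 0), IsIso.hom_inv_id_assoc]
  rw [← Category.assoc, natTrans_eqToHom (SS.Sδbar k (n + (k : ℤ))) R.Mt_zero.symm]
  simp [eqToHom_trans]
  exact _ ≫= eqToHom_trans _ _

theorem beta_omega (n : ℤ) (k : ℕ) :
    beta SS R n k ≫ omegaComp SS R n (k + 1) = resMap T R n k := by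
  unfold omegaComp beta resMap resObj SatelliteSystem.obj
  rw [oeps_eq SS R _ k 0,
    oe1_congr SS R (cast_step n k).symm k 0,
    eps_congr SS (cast_step n k).symm (R.shortExact (0 + k)) 0]
  simp only [Category.assoc, eqToHom_trans_assoc, eqToHom_refl, Category.id_comp,
    IsIso.inv_hom_id_assoc]
  rw [SS.δ_fac (R.shortExact k) (n + (k : ℤ))]
  rw [show (eqToHom (show (T.T (n + (k : ℤ))).obj (R.Mt k) =
      (SS.S 0 (n + (k : ℤ))).obj (R.Mt (0 + k)) by rw [SS.S_zero, Nat.zero_add]) :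
        (T.T (n + (k : ℤ))).obj (R.Mt k) ⟶ (SS.S 0 (n + (k : ℤ))).obj (R.Mt (0 + k))) =
    eqToHom (show (T.T (n + (k : ℤ))).obj (R.Mt k) =
      (SS.S 0 (n + (k : ℤ))).obj (R.Mt k) by rw [SS.S_zero]) ≫
    eqToHom (congrArg (SS.S 0 (n + (k : ℤ))).obj
      (congrArg R.Mt (Nat.zero_add k).symm)) from (eqToHom_trans _ _).symm]
  simp only [Category.assoc]
  rw [reassoc_of% (natTrans_eqToHom (SS.Sδbar 0 (n + (k : ℤ)))
    (congrArg R.Mt (Nat.zero_add k).symm))]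
  erw [eqToHom_trans_assoc, eqToHom_refl, Category.id_comp, IsIso.inv_hom_id_assoc]
  rw [reassoc_of% (eps0_reindex SS R (n + (k : ℤ) + 1)
    (show k = 0 + k from (Nat.zero_add k).symm))]
  simp [eqToHom_trans]

end Beta
section Naturality

variable {C : Type u} [Category.{v} C] [Abelian C]
variable {D : Type u'} [Category.{v'} D] [Abelian D]
variable {T : CohomFunctor C D} (SS : SatelliteSystem T)
variable {M N : C} {f : M ⟶ N} {RM : SyzygySequence M} {RN : SyzygySequence N}
variable (F : SyzygyLift f RM RN)

theorem ft_reindex (m : ℤ) {i i' : ℕ} (h : i = i') :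
    eqToHom (congrArg (fun a => (T.T m).obj (RM.Mt a)) h) ≫ (T.T m).map (F.ft i') =
      (T.T m).map (F.ft i) ≫ eqToHom (congrArg (fun a => (T.T m).obj (RN.Mt a)) h) := by
  subst h; simp

/-- The morphism of short exact sequences of syzygies induced by a lift. -/
def liftHom (j : ℕ) :
    ShortComplex.mk (RM.ι j) (RM.π j) (RM.w j) ⟶ ShortComplex.mk (RN.ι j) (RN.π j) (RN.w j) where
  τ₁ := F.ft (j + 1)
  τ₂ := F.fP j
  τ₃ := F.ft j
  comm₁₂ := (F.comm_ι j).symm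
  comm₂₃ := (F.comm_π j).symm

theorem oeps_natural (m : ℤ) (k j : ℕ) :
    oeps SS RM m k j ≫ (T.T m).map (F.ft (j + k)) =
      (SS.S k m).map (F.ft j) ≫ oeps SS RN m k j := by
  induction k generalizing j with
  | zero =>
      have := Functor.congr_hom (SS.S_zero m) (F.ft j)
      simp only [oeps]
      rw [this]
      simp [eqToHom_trans]
  | succ k ih =>
      rw [show oeps SS RM m (k + 1) j = SS.ε (RM.shortExact j) k m ≫
          oeps SS RM m k (j + 1) ≫
          eqToHom (congrArg (fun i => (T.T m).obj (RM.Mt i))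
            (show (j + 1) + k = j + (k + 1) by omega)) from rfl,
        show oeps SS RN m (k + 1) j = SS.ε (RN.shortExact j) k m ≫
          oeps SS RN m k (j + 1) ≫
          eqToHom (congrArg (fun i => (T.T m).obj (RN.Mt i))
            (show (j + 1) + k = j + (k + 1) by omega)) from rfl]
      simp only [Category.assoc]
      rw [ft_reindex F m (show (j + 1) + k = j + (k + 1) by omega)]
      rw [← Category.assoc (oeps SS RM m k (j + 1)), ih (j + 1)]
      simp only [Category.assoc]
      rw [reassoc_of% (show (SS.S (k + 1) m).map (F.ft j) ≫ SS.ε (RN.shortExact j) k m =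
        SS.ε (RM.shortExact j) k m ≫ (SS.S k m).map (F.ft (j + 1)) from
        SS.ε_natural (RM.shortExact j) (RN.shortExact j) (liftHom F j) k m)]

theorem omegaComp_natural (n : ℤ) (k : ℕ) :
    omegaComp SS RM n k ≫ (T.T (n + (k : ℤ))).map (F.ft k) =
      (SS.S k (n + (k : ℤ))).map f ≫ omegaComp SS RN n k := by
  unfold omegaComp SatelliteSystem.obj resObj
  simp only [Category.assoc]
  rw [ft_reindex F (n + (k : ℤ)) (Nat.zero_add k)]
  rw [reassoc_of% (oeps_natural SS F (n + (k : ℤ)) k 0)]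
  simp [F.ft_zero, eqToHom_map, eqToHom_trans]

end Naturality
theorem lift_diff {C : Type u} [Category.{v} C] [Abelian C] {M N : C} {f : M ⟶ N}
    {RM : SyzygySequence M} {RN : SyzygySequence N} (F F' : SyzygyLift f RM RN) :
    ∀ k : ℕ, ∃ h : RM.P k ⟶ RN.Mt (k + 1), F'.ft (k + 1) - F.ft (k + 1) = RM.ι k ≫ h := by
  intro k
  induction k with
  | zero =>
      have hmono := (RN.shortExact 0).mono_f
      have hp : (F'.fP 0 - F.fP 0) ≫ RN.π 0 = 0 := by
        rw [Preadditive.sub_comp, ← F'.comm_π 0, ← F.comm_π 0, F.ft_zero, F'.ft_zero,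
          sub_self]
      obtain ⟨l, hl⟩ := (RN.shortExact 0).exact.lift' (F'.fP 0 - F.fP 0) hp
      refine ⟨l, ?_⟩
      rw [← cancel_mono (RN.ι 0), Preadditive.sub_comp, ← F'.comm_ι 0, ← F.comm_ι 0,
        Category.assoc]
      rw [show l ≫ RN.ι 0 = F'.fP 0 - F.fP 0 from hl, Preadditive.comp_sub]
  | succ k ih =>
      obtain ⟨h, hh⟩ := ih
      have hproj := RM.projP k
      have hepi := (RN.shortExact (k + 1)).epi_g
      have hmono := (RN.shortExact (k + 1)).mono_f
      set e := Projective.factorThru h (RN.π (k + 1)) with he_def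
      have he : e ≫ RN.π (k + 1) = h := Projective.factorThru_comp _ _
      have hq : ((F'.fP (k + 1) - F.fP (k + 1)) - RM.π (k + 1) ≫ RM.ι k ≫ e) ≫
          RN.π (k + 1) = 0 := by
        simp only [Preadditive.sub_comp, Category.assoc, he]
        rw [← F'.comm_π (k + 1), ← F.comm_π (k + 1), ← Preadditive.comp_sub, hh]
        simp
      obtain ⟨l, hl⟩ := (RN.shortExact (k + 1)).exact.lift'
        ((F'.fP (k + 1) - F.fP (k + 1)) - RM.π (k + 1) ≫ RM.ι k ≫ e) hq
      refine ⟨l, ?_⟩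
      rw [← cancel_mono (RN.ι (k + 1)), Preadditive.sub_comp, ← F'.comm_ι (k + 1),
        ← F.comm_ι (k + 1), Category.assoc,
        show l ≫ RN.ι (k + 1) =
          (F'.fP (k + 1) - F.fP (k + 1)) - RM.π (k + 1) ≫ RM.ι k ≫ e from hl]
      have hw : RM.ι (k + 1) ≫ RM.π (k + 1) = 0 := RM.w (k + 1)
      simp [Preadditive.comp_sub, reassoc_of% hw]

/-- Definition 4.2 / Lemma 4.3. The isomorphisms `ω_n` between the satellite
functor construction and the resolution construction are natural: for every morphism
`f : M ⟶ N` in `C` the square with horizontal maps `ω_n(M)`, `ω_n(N)` and vertical maps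
`T̂^n(f)` and `T_Res^n(f) := colim_{k ∈ ℕ₀} T^{n+k}(f̃_k)` commutes, for any sequence of lifts
`(f̃_k : M̃_k ⟶ Ñ_k)` of `f` between syzygies. In particular `T_Res^n(f)` does not depend on
the choice of lifts. -/
theorem omega_natural
    {C : Type u} [Category.{v} C] [Abelian C] [EnoughProjectives C]
    {D : Type u'} [Category.{v'} D] [Abelian D]
    [HasColimitsOfShape ℕ D] [PreservesFiniteLimits (colim : (ℕ ⥤ D) ⥤ D)]
    (T : CohomFunctor C D) (SS : SatelliteSystem T)
    {M N : C} (f : M ⟶ N) (RM : SyzygySequence M) (RN : SyzygySequence N)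
    (F : SyzygyLift f RM RN) (n : ℤ)
    (L₁M : D) (ι₁M : ∀ k, SS.obj n M k ⟶ L₁M) (h₁M : IsDirectLimit (SS.map n M) L₁M ι₁M)
    (L₁N : D) (ι₁N : ∀ k, SS.obj n N k ⟶ L₁N) (h₁N : IsDirectLimit (SS.map n N) L₁N ι₁N)
    (L₂M : D) (ι₂M : ∀ k, resObj T RM n k ⟶ L₂M)
    (h₂M : IsDirectLimit (resMap T RM n) L₂M ι₂M)
    (L₂N : D) (ι₂N : ∀ k, resObj T RN n k ⟶ L₂N)
    (h₂N : IsDirectLimit (resMap T RN n) L₂N ι₂N)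
    (ωM : L₁M ⟶ L₂M) (hωM : ∀ k, ι₁M k ≫ ωM = omegaComp SS RM n k ≫ ι₂M k)
    (ωN : L₁N ⟶ L₂N) (hωN : ∀ k, ι₁N k ≫ ωN = omegaComp SS RN n k ≫ ι₂N k)
    (u₁ : L₁M ⟶ L₁N)
    (hu₁ : ∀ k, ι₁M k ≫ u₁ = (SS.S k (n + (k : ℤ))).map f ≫ ι₁N k)
    (u₂ : L₂M ⟶ L₂N)
    (hu₂ : ∀ k, ι₂M k ≫ u₂ = (T.T (n + (k : ℤ))).map (F.ft k) ≫ ι₂N k) :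
    IsIso ωM ∧ IsIso ωN ∧ ωM ≫ u₂ = u₁ ≫ ωN ∧
    (∀ (F' : SyzygyLift f RM RN) (u₂' : L₂M ⟶ L₂N),
      (∀ k, ι₂M k ≫ u₂' = (T.T (n + (k : ℤ))).map (F'.ft k) ≫ ι₂N k) → u₂' = u₂) := by
  have hcompatM : ∀ k, resMap T RM n k ≫ (beta SS RM n (k + 1) ≫ ι₁M (k + 1 + 1)) =
      beta SS RM n k ≫ ι₁M (k + 1) := by
    intro k
    rw [← beta_omega SS RM n k]
    simp only [Category.assoc]
    rw [← Category.assoc (omegaComp SS RM n (k + 1)), omega_beta SS RM n (k + 1),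
      h₁M.comm (k + 1)]
  have hcompatN : ∀ k, resMap T RN n k ≫ (beta SS RN n (k + 1) ≫ ι₁N (k + 1 + 1)) =
      beta SS RN n k ≫ ι₁N (k + 1) := by
    intro k
    rw [← beta_omega SS RN n k]
    simp only [Category.assoc]
    rw [← Category.assoc (omegaComp SS RN n (k + 1)), omega_beta SS RN n (k + 1),
      h₁N.comm (k + 1)]
  obtain ⟨ψM, hψM, -⟩ := h₂M.desc L₁M (fun k => beta SS RM n k ≫ ι₁M (k + 1)) hcompatM
  obtain ⟨ψN, hψN, -⟩ := h₂N.desc L₁N (fun k => beta SS RN n k ≫ ι₁N (k + 1)) hcompatN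
  have hisoM : IsIso ωM := by
    refine ⟨ψM, ?_, ?_⟩
    · refine h₁M.hom_ext fun k => ?_
      rw [← Category.assoc, hωM k, Category.assoc, hψM k, ← Category.assoc,
        omega_beta SS RM n k, h₁M.comm k, Category.comp_id]
    · refine h₂M.hom_ext fun k => ?_
      rw [← Category.assoc, hψM k, Category.assoc, hωM (k + 1), ← Category.assoc,
        beta_omega SS RM n k, h₂M.comm k, Category.comp_id]
  have hisoN : IsIso ωN := by
    refine ⟨ψN, ?_, ?_⟩
    · refine h₁N.hom_ext fun k => ?_
      rw [← Category.assoc, hωN k, Category.assoc, hψN k, ← Category.assoc,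
        omega_beta SS RN n k, h₁N.comm k, Category.comp_id]
    · refine h₂N.hom_ext fun k => ?_
      rw [← Category.assoc, hψN k, Category.assoc, hωN (k + 1), ← Category.assoc,
        beta_omega SS RN n k, h₂N.comm k, Category.comp_id]
  refine ⟨hisoM, hisoN, ?_, ?_⟩
  · refine h₁M.hom_ext fun k => ?_
    calc ι₁M k ≫ ωM ≫ u₂
        = omegaComp SS RM n k ≫ (T.T (n + (k : ℤ))).map (F.ft k) ≫ ι₂N k := by
          rw [← Category.assoc, hωM k, Category.assoc, hu₂ k]; rfl
      _ = ((SS.S k (n + (k : ℤ))).map f ≫ omegaComp SS RN n k ≫ ι₂N k : SS.obj n M k ⟶ L₂N) := by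
          exact (Category.assoc _ _ _).symm.trans
            ((omegaComp_natural SS F n k =≫ ι₂N k).trans (Category.assoc _ _ _))
      _ = ((SS.S k (n + (k : ℤ))).map f ≫ ι₁N k ≫ ωN : SS.obj n M k ⟶ L₂N) := by
          exact _ ≫= (hωN k).symm
      _ = ι₁M k ≫ u₁ ≫ ωN := by
          exact ((Category.assoc _ _ _).symm.trans ((hu₁ k).symm =≫ ωN)).trans
            (Category.assoc _ _ _)
  · intro F' u₂' hu₂'
    refine h₂M.hom_ext fun k => ?_
    rw [hu₂' k, hu₂ k]
    cases k with
    | zero =>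
        have h0 : F'.ft 0 = F.ft 0 := by rw [F.ft_zero, F'.ft_zero]
        rw [h0]
    | succ k =>
        have key : (T.T (n + ((k + 1 : ℕ) : ℤ))).map (F'.ft (k + 1)) ≫
            T.δ (RN.shortExact (k + 1)) (n + ((k + 1 : ℕ) : ℤ)) =
            (T.T (n + ((k + 1 : ℕ) : ℤ))).map (F.ft (k + 1)) ≫
            T.δ (RN.shortExact (k + 1)) (n + ((k + 1 : ℕ) : ℤ)) := by
          have hadd : (T.T (n + ((k + 1 : ℕ) : ℤ))).Additive := T.additive _
          rw [← sub_eq_zero, ← Preadditive.sub_comp, ← Functor.map_sub]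
          obtain ⟨h, hh⟩ := lift_diff F F' k
          have hproj := RM.projP k
          have hepi := (RN.shortExact (k + 1)).epi_g
          rw [hh, ← Projective.factorThru_comp h (RN.π (k + 1))]
          have zz : (T.T (n + ((k + 1 : ℕ) : ℤ))).map (RN.π (k + 1)) ≫
              T.δ (RN.shortExact (k + 1)) (n + ((k + 1 : ℕ) : ℤ)) = 0 :=
            T.zero₂ (RN.shortExact (k + 1)) (n + ((k + 1 : ℕ) : ℤ))
          simp only [Functor.map_comp, Category.assoc]
          rw [zz]
          simp
        rw [← h₂N.comm (k + 1)]
        unfold resMap resObj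
        simp only [← Category.assoc]
        exact (_ ≫= Category.assoc _ _ _).trans (((Category.assoc _ _ _).symm.trans (key =≫ _)).trans
          ((Category.assoc _ _ _).trans (_ ≫= (Category.assoc _ _ _).symm)))

end Mislin
end

section
/- Let 0 → A → B → C → 0 be a short exact sequence in C, and choose a sequence of short exact sequences of syzygies (0 → Ã_k → B̃_k → C̃_k → 0)_{k ∈ ℕ₀} via the Horseshoe Lemma. For every n ∈ ℤ and k ∈ ℕ₀ the square formed by the connecting homomorphisms δ^{n+k} : T^{n+k}(C̃_k) → T^{n+k+1}(Ã_k) (from the short exact sequences of syzygies) and δ^{n+k} : T^{n+k}(C̃_k) → T^{n+k+1}(C̃_{k+1}), δ^{n+k+1} : T^{n+k+1}(Ã_k) → T^{n+k+2}(Ã_{k+1}) (from the resolution construction) anticommutes, so δ̃^n := colim_{k ∈ ℕ₀} (−1)^k δ^{n+k} : T_Res^n(C) → T_Res^{n+1}(A) is well-defined; and for every n ∈ ℤ the square with horizontal maps ω_n : T̂^n(C) → T_Res^n(C) and ω_{n+1} : T̂^{n+1}(A) → T_Res^{n+1}(A) and vertical maps δ̂^n and δ̃^n commutes. -/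
open CategoryTheory Category Limits

universe v u v' u'

namespace Mislin

variable (C : Type u) [Category.{v} C] [Abelian C]
variable (D : Type u') [Category.{v'} D] [Abelian D]

variable {C D}

section Anticommute

variable {X : ShortComplex C} {hX : X.ShortExact}

/-- Abstract 3×3 anticommutativity of connecting homomorphisms, for two natural families of
connecting maps `d₁ : F(X₃) ⟶ G(X₁)` and `d₂ : G(X₃) ⟶ E(X₁)` applied to a Horseshoe
diagram of syzygies at level `k`. -/
lemma horseshoe_anticommute (H : HorseshoeData hX) (k : ℕ)
    {F G E : C ⥤ D} (hG : G.Additive)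
    (d₁ : ∀ {Y : ShortComplex C}, Y.ShortExact → (F.obj Y.X₃ ⟶ G.obj Y.X₁))
    (d₂ : ∀ {Y : ShortComplex C}, Y.ShortExact → (G.obj Y.X₃ ⟶ E.obj Y.X₁))
    (nat₁ : ∀ {Y Z : ShortComplex C} (hY : Y.ShortExact) (hZ : Z.ShortExact) (φ : Y ⟶ Z),
      F.map φ.τ₃ ≫ d₁ hZ = d₁ hY ≫ G.map φ.τ₁)
    (nat₂ : ∀ {Y Z : ShortComplex C} (hY : Y.ShortExact) (hZ : Z.ShortExact) (φ : Y ⟶ Z),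
      G.map φ.τ₃ ≫ d₂ hZ = d₂ hY ≫ E.map φ.τ₁) :
    d₁ (H.shortExact k) ≫ d₂ (H.RA.shortExact k) =
      -(d₁ (H.RC.shortExact k) ≫ d₂ (H.shortExact (k + 1))) := by
  letI := hG
  haveI : Mono (H.f k) := (H.shortExact k).mono_f
  haveI : Epi (H.g k) := (H.shortExact k).epi_g
  haveI : Mono (H.f (k + 1)) := (H.shortExact (k + 1)).mono_f
  haveI : Mono (H.RB.ι k) := (H.RB.shortExact k).mono_f
  haveI : Epi (H.RB.π k) := (H.RB.shortExact k).epi_g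
  haveI : Mono (H.RA.ι k) := (H.RA.shortExact k).mono_f
  haveI : Epi (H.RA.π k) := (H.RA.shortExact k).epi_g
  haveI : Mono (H.RC.ι k) := (H.RC.shortExact k).mono_f
  -- the object `K = Ker (P^B_k → C̃_k)`, realised as a pullback
  set p : pullback (H.f k) (H.RB.π k) ⟶ H.RA.Mt k := pullback.fst (H.f k) (H.RB.π k) with hp
  set iK : pullback (H.f k) (H.RB.π k) ⟶ H.RB.P k := pullback.snd (H.f k) (H.RB.π k) with hiK
  set q : H.RB.P k ⟶ H.RC.Mt k := H.RB.π k ≫ H.g k with hq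
  have hiKq : iK ≫ q = 0 := by
    rw [hq, hiK, ← Category.assoc, ← pullback.condition, Category.assoc, H.w k, comp_zero]
  haveI : Epi q := by rw [hq]; exact epi_comp _ _
  haveI : Mono iK := by rw [hiK]; infer_instance
  haveI : Epi p := by rw [hp]; infer_instance
  -- `u : B̃_{k+1} ⟶ K` and `v : P^A_k ⟶ K`
  have hu0 : (0 : H.RB.Mt (k + 1) ⟶ H.RA.Mt k) ≫ H.f k = H.RB.ι k ≫ H.RB.π k := by
    rw [zero_comp, H.RB.w k]
  set u : H.RB.Mt (k + 1) ⟶ pullback (H.f k) (H.RB.π k) := pullback.lift _ _ hu0 with hu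
  set v : H.RA.P k ⟶ pullback (H.f k) (H.RB.π k) :=
    pullback.lift (H.RA.π k) (H.fP k) (H.comm_fπ k) with hv
  have hufst : u ≫ p = 0 := pullback.lift_fst _ _ _
  have husnd : u ≫ iK = H.RB.ι k := pullback.lift_snd _ _ _
  have hvfst : v ≫ p = H.RA.π k := pullback.lift_fst _ _ _
  have hvsnd : v ≫ iK = H.fP k := pullback.lift_snd _ _ _
  haveI : Mono u := mono_of_mono_fac husnd
  -- `r : K ⟶ C̃_{k+1}`
  have hrw : (iK ≫ H.gP k) ≫ H.RC.π k = 0 := by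
    rw [Category.assoc, ← H.comm_gπ k, ← hq, hiKq]
  obtain ⟨r, hr⟩ := KernelFork.IsLimit.lift' (H.RC.shortExact k).fIsKernel (iK ≫ H.gP k) hrw
  rw [Fork.ι_ofι] at hr
  have hvr : v ≫ r = 0 := by
    rw [← cancel_mono (H.RC.ι k), Category.assoc, hr, zero_comp, ← Category.assoc, hvsnd,
      H.wP k]
  have hur : u ≫ r = H.g (k + 1) := by
    rw [← cancel_mono (H.RC.ι k), Category.assoc, hr, ← Category.assoc, husnd, H.comm_gι k]
  -- the short exact sequence `0 → K → P^B_k → C̃_k → 0`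
  have exi : (ShortComplex.mk iK q hiKq).ShortExact := by
    refine ShortComplex.ShortExact.mk'
      (ShortComplex.exact_of_f_is_kernel _ (KernelFork.IsLimit.ofι' iK hiKq ?_))
      inferInstance inferInstance
    intro Z h hh
    have hh' : (h ≫ H.RB.π k) ≫ H.g k = 0 := by
      rw [Category.assoc, ← hq]; exact hh
    obtain ⟨l, hl⟩ :=
      KernelFork.IsLimit.lift' (H.shortExact k).fIsKernel (h ≫ H.RB.π k) hh'
    rw [Fork.ι_ofι] at hl
    exact ⟨pullback.lift l h hl, pullback.lift_snd _ _ _⟩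
  -- the short exact sequence `0 → B̃_{k+1} → K → Ã_k → 0`
  have exii : (ShortComplex.mk u p hufst).ShortExact := by
    refine ShortComplex.ShortExact.mk'
      (ShortComplex.exact_of_f_is_kernel _ (KernelFork.IsLimit.ofι' u hufst ?_))
      inferInstance inferInstance
    intro Z h hh
    have hh' : (h ≫ iK) ≫ H.RB.π k = 0 := by
      rw [Category.assoc, hiK, ← pullback.condition, ← hp, ← Category.assoc, hh, zero_comp]
    obtain ⟨l, hl⟩ :=
      KernelFork.IsLimit.lift' (H.RB.shortExact k).fIsKernel (h ≫ iK) hh'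
    rw [Fork.ι_ofι] at hl
    refine ⟨l, ?_⟩
    apply pullback.hom_ext
    · rw [Category.assoc, ← hp, hufst, comp_zero]
      exact hh.symm
    · rw [Category.assoc, ← hiK, husnd]
      exact hl
  -- the short exact sequence `0 → Ã_{k+1} → P^A_k ⊞ B̃_{k+1} → K → 0`
  set t : H.RA.Mt (k + 1) ⟶ H.RA.P k ⊞ H.RB.Mt (k + 1) :=
    biprod.lift (H.RA.ι k) (-(H.f (k + 1))) with ht
  set s : H.RA.P k ⊞ H.RB.Mt (k + 1) ⟶ pullback (H.f k) (H.RB.π k) := biprod.desc v u with hs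
  have huv : H.RA.ι k ≫ v = H.f (k + 1) ≫ u := by
    apply pullback.hom_ext
    · rw [Category.assoc, Category.assoc, ← hp, hvfst, hufst, comp_zero, H.RA.w k]
    · rw [Category.assoc, Category.assoc, ← hiK, hvsnd, husnd, H.comm_fι k]
  have hts : t ≫ s = 0 := by
    rw [ht, hs, biprod.lift_desc, Preadditive.neg_comp, huv, add_neg_cancel]
  haveI : Mono t := mono_of_mono_fac (show t ≫ biprod.fst = H.RA.ι k by
    rw [ht, biprod.lift_fst])
  have hsp : s ≫ p = biprod.fst ≫ H.RA.π k := by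
    apply biprod.hom_ext'
    · rw [← Category.assoc, ← Category.assoc, hs, biprod.inl_desc, hvfst, biprod.inl_fst,
        id_comp]
    · rw [← Category.assoc, ← Category.assoc, hs, biprod.inr_desc, hufst, biprod.inr_fst,
        zero_comp]
  have hsr : s ≫ r = biprod.snd ≫ H.g (k + 1) := by
    apply biprod.hom_ext'
    · rw [← Category.assoc, ← Category.assoc, hs, biprod.inl_desc, hvr, biprod.inl_snd,
        zero_comp]
    · rw [← Category.assoc, ← Category.assoc, hs, biprod.inr_desc, hur, biprod.inr_snd,
        id_comp]
  have exiv : (ShortComplex.mk t s hts).ShortExact := by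
    haveI : Epi s := by
      apply Preadditive.epi_of_cancel_zero
      intro Z h hh
      have hvh : v ≫ h = 0 := by
        have h1 := biprod.inl ≫= hh
        rwa [← Category.assoc, hs, biprod.inl_desc, comp_zero] at h1
      have huh : u ≫ h = 0 := by
        have h2 := biprod.inr ≫= hh
        rwa [← Category.assoc, hs, biprod.inr_desc, comp_zero] at h2
      obtain ⟨d, hd⟩ := CokernelCofork.IsColimit.desc' exii.gIsCokernel h huh
      rw [Cofork.π_ofπ] at hd
      have hπd : H.RA.π k ≫ d = 0 := by rw [← hvfst, Category.assoc, hd, hvh]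
      have hd0 : d = 0 := by rwa [← cancel_epi (H.RA.π k), comp_zero]
      rw [← hd, hd0, comp_zero]
    refine ShortComplex.ShortExact.mk'
      (ShortComplex.exact_of_f_is_kernel _ (KernelFork.IsLimit.ofι' t hts ?_))
      inferInstance inferInstance
    intro Z h hh
    have hdec : h = biprod.lift (h ≫ biprod.fst) (h ≫ biprod.snd) := by
      apply biprod.hom_ext
      · rw [biprod.lift_fst]
      · rw [biprod.lift_snd]
    have hh2 : (h ≫ biprod.fst) ≫ v + (h ≫ biprod.snd) ≫ u = 0 := by
      rw [← biprod.lift_desc, ← hs, ← hdec, hh]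
    have e1 : (h ≫ biprod.fst) ≫ H.RA.π k = 0 := by
      have h3 := hh2 =≫ p
      simp only [Preadditive.add_comp, Category.assoc, hvfst, hufst, comp_zero, add_zero,
        zero_comp] at h3
      rw [Category.assoc]
      exact h3
    obtain ⟨z, hz⟩ := KernelFork.IsLimit.lift' (H.RA.shortExact k).fIsKernel _ e1
    rw [Fork.ι_ofι] at hz
    have e2 : h ≫ biprod.fst ≫ H.fP k + h ≫ biprod.snd ≫ H.RB.ι k = 0 := by
      have h4 := hh2 =≫ iK
      simp only [Preadditive.add_comp, Category.assoc, hvsnd, husnd, zero_comp] at h4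
      exact h4
    have hz' : z ≫ H.RA.ι k = h ≫ biprod.fst := hz
    have key : h ≫ biprod.fst ≫ H.fP k = z ≫ H.f (k + 1) ≫ H.RB.ι k := by
      calc h ≫ biprod.fst ≫ H.fP k = (h ≫ biprod.fst) ≫ H.fP k :=
            (Category.assoc _ _ _).symm
        _ = (z ≫ H.RA.ι k) ≫ H.fP k := by rw [hz']
        _ = z ≫ H.f (k + 1) ≫ H.RB.ι k := by rw [Category.assoc, H.comm_fι k]
    rw [key] at e2
    have e2' := eq_neg_of_add_eq_zero_right e2
    have e3 : h ≫ biprod.snd = z ≫ (-(H.f (k + 1))) := by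
      rw [← cancel_mono (H.RB.ι k)]
      simp only [Category.assoc, Preadditive.neg_comp, Preadditive.comp_neg]
      exact e2'
    refine ⟨z, ?_⟩
    apply biprod.hom_ext
    · rw [Category.assoc, show t ≫ biprod.fst = H.RA.ι k from biprod.lift_fst _ _]
      exact hz'
    · rw [Category.assoc, show t ≫ biprod.snd = -H.f (k + 1) from biprod.lift_snd _ _]
      exact e3.symm
  -- naturality of `d₁` and `d₂` applied to four morphisms of short exact sequences
  have eq1 : d₁ (H.shortExact k) = d₁ exi ≫ G.map p := by
    have h5 := nat₁ exi (H.shortExact k)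
      { τ₁ := p, τ₂ := H.RB.π k, τ₃ := 𝟙 _,
        comm₁₂ := pullback.condition,
        comm₂₃ := by show H.RB.π k ≫ H.g k = q ≫ 𝟙 _; rw [comp_id] }
    simpa using h5
  have eq2 : d₁ (H.RC.shortExact k) = d₁ exi ≫ G.map r := by
    have h6 := nat₁ exi (H.RC.shortExact k)
      { τ₁ := r, τ₂ := H.gP k, τ₃ := 𝟙 _,
        comm₁₂ := hr,
        comm₂₃ := by
          show H.gP k ≫ H.RC.π k = q ≫ 𝟙 _
          rw [comp_id]
          exact (H.comm_gπ k).symm }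
    simpa using h6
  have eq3 : G.map p ≫ d₂ (H.RA.shortExact k) = d₂ exiv := by
    have h7 := nat₂ exiv (H.RA.shortExact k)
      { τ₁ := 𝟙 _, τ₂ := biprod.fst, τ₃ := p,
        comm₁₂ := by
          show 𝟙 _ ≫ H.RA.ι k = t ≫ biprod.fst
          rw [id_comp]
          exact (biprod.lift_fst _ _).symm,
        comm₂₃ := hsp.symm }
    simpa using h7
  have eq4 : G.map (-r) ≫ d₂ (H.shortExact (k + 1)) = d₂ exiv := by
    have h8 := nat₂ exiv (H.shortExact (k + 1))
      { τ₁ := 𝟙 _, τ₂ := -biprod.snd, τ₃ := -r,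
        comm₁₂ := by
          show 𝟙 _ ≫ H.f (k + 1) = t ≫ (-biprod.snd)
          rw [id_comp, Preadditive.comp_neg,
            show t ≫ biprod.snd = -H.f (k + 1) from biprod.lift_snd _ _, neg_neg],
        comm₂₃ := by
          show (-biprod.snd) ≫ H.g (k + 1) = s ≫ (-r)
          rw [Preadditive.neg_comp, Preadditive.comp_neg, hsr] }
    simpa using h8
  calc d₁ (H.shortExact k) ≫ d₂ (H.RA.shortExact k)
      = d₁ exi ≫ G.map p ≫ d₂ (H.RA.shortExact k) := by rw [eq1, Category.assoc]
    _ = d₁ exi ≫ d₂ exiv := by rw [eq3]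
    _ = d₁ exi ≫ G.map (-r) ≫ d₂ (H.shortExact (k + 1)) := by rw [eq4]
    _ = -(d₁ exi ≫ G.map r ≫ d₂ (H.shortExact (k + 1))) := by
        rw [Functor.map_neg, Preadditive.neg_comp, Preadditive.comp_neg]
    _ = -(d₁ (H.RC.shortExact k) ≫ d₂ (H.shortExact (k + 1))) := by
        rw [eq2, Category.assoc]

end Anticommute

section Congruences

lemma δ_deg_congr (T : CohomFunctor C D) {Y : ShortComplex C} (hY : Y.ShortExact)
    {m₁ m₂ : ℤ} (h : m₁ = m₂) :
    T.δ hY m₁ = eqToHom (congrArg (fun m : ℤ => (T.T m).obj Y.X₃) h) ≫ T.δ hY m₂ ≫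
      eqToHom (congrArg (fun m : ℤ => (T.T (m + 1)).obj Y.X₁) h.symm) := by
  subst h; simp

lemma δ_syz_eqToHom_comm (T : CohomFunctor C D) {M : C} (R : SyzygySequence M)
    {i₁ i₂ : ℕ} (h : i₁ = i₂) (m : ℤ) :
    eqToHom (congrArg (fun i : ℕ => (T.T m).obj (R.Mt i)) h) ≫ T.δ (R.shortExact i₂) m =
      T.δ (R.shortExact i₁) m ≫
        eqToHom (congrArg (fun i : ℕ => (T.T (m + 1)).obj (R.Mt (i + 1))) h) := by
  subst h; simp

lemma δ_H_eqToHom_comm (T : CohomFunctor C D) {X : ShortComplex C} {hX : X.ShortExact}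
    (H : HorseshoeData hX) {i₁ i₂ : ℕ} (h : i₁ = i₂) (m : ℤ) :
    eqToHom (congrArg (fun i : ℕ => (T.T m).obj (H.RC.Mt i)) h) ≫ T.δ (H.shortExact i₂) m =
      T.δ (H.shortExact i₁) m ≫
        eqToHom (congrArg (fun i : ℕ => (T.T (m + 1)).obj (H.RA.Mt i)) h) := by
  subst h; simp

lemma oeps_deg_congr {T : CohomFunctor C D} (SS : SatelliteSystem T) {M : C}
    (R : SyzygySequence M) {m₁ m₂ : ℤ} (h : m₁ = m₂) (k j : ℕ) :
    oeps SS R m₁ k j = eqToHom (congrArg (fun m : ℤ => (SS.S k m).obj (R.Mt j)) h) ≫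
      oeps SS R m₂ k j ≫
        eqToHom (congrArg (fun m : ℤ => (T.T m).obj (R.Mt (j + k))) h.symm) := by
  subst h; simp

lemma oeps_zero_eq {T : CohomFunctor C D} (SS : SatelliteSystem T) {M : C}
    (R : SyzygySequence M) (m : ℤ) (j : ℕ) :
    oeps SS R m 0 j = eqToHom (by rw [SS.S_zero]; rfl) := rfl

lemma oeps_succ_eq {T : CohomFunctor C D} (SS : SatelliteSystem T) {M : C}
    (R : SyzygySequence M) (m : ℤ) (k j : ℕ) :
    oeps SS R m (k + 1) j = SS.ε (R.shortExact j) k m ≫ oeps SS R m k (j + 1) ≫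
      eqToHom (congrArg (fun i => (T.T m).obj (R.Mt i))
        (show (j + 1) + k = j + (k + 1) by omega)) := rfl

end Congruences

section MainClaim

variable {X : ShortComplex C} {hX : X.ShortExact}

/-- The key inductive compatibility between the kernel monomorphisms `ε`, the composites
`oeps` and the connecting homomorphisms of the two constructions (with the sign `(-1)^{j+1}`
coming from the 3×3 anticommutativity). -/
lemma main_claim (T : CohomFunctor C D) (SS : SatelliteSystem T) (H : HorseshoeData hX) :
    ∀ (j i : ℕ) (m : ℤ),
      SS.ε (H.shortExact i) j m ≫ oeps SS H.RA m j i ≫ T.δ (H.RA.shortExact (i + j)) m =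
        ((-1 : ℤ) ^ (j + 1)) •
          (oeps SS H.RC m (j + 1) i ≫ T.δ (H.shortExact (i + j + 1)) m) := by
  intro j
  induction j with
  | zero =>
    intro i m
    have key := horseshoe_anticommute H i (T.additive m)
      (d₁ := fun {Y} hY => SS.ε hY 0 m ≫
        eqToHom (congrArg (fun F : C ⥤ D => F.obj Y.X₁) (SS.S_zero m)))
      (d₂ := fun {Y} hY => T.δ hY m)
      (nat₁ := fun {Y Z} hY hZ φ => by
        have h1 := SS.ε_natural hY hZ φ 0 m
        have h2 := Functor.congr_hom (SS.S_zero m) φ.τ₁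
        rw [← Category.assoc, h1, Category.assoc, h2]
        simp)
      (nat₂ := fun {Y Z} hY hZ φ => T.δ_natural hY hZ φ m)
    simp only [oeps_succ_eq, oeps_zero_eq, Nat.add_zero, pow_one, neg_smul, one_smul,
      Category.assoc] at key ⊢
    simpa using key
  | succ j IH =>
    intro i m
    have key := horseshoe_anticommute H i (SS.additive (j + 1) m)
      (d₁ := fun {Y} hY => SS.ε hY (j + 1) m)
      (d₂ := fun {Y} hY => SS.ε hY j m)
      (nat₁ := fun {Y Z} hY hZ φ => SS.ε_natural hY hZ φ (j + 1) m)
      (nat₂ := fun {Y Z} hY hZ φ => SS.ε_natural hY hZ φ j m)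
    have IH2 := IH (i + 1) m =≫
      eqToHom (congrArg (fun i : ℕ => (T.T (m + 1)).obj (H.RA.Mt (i + 1)))
        (show (i + 1) + j = i + (j + 1) by omega))
    simp only [Category.assoc, Preadditive.zsmul_comp] at IH2
    rw [oeps_succ_eq SS H.RA m j i, oeps_succ_eq SS H.RC m (j + 1) i]
    simp only [Category.assoc]
    rw [δ_syz_eqToHom_comm T H.RA (show (i + 1) + j = i + (j + 1) by omega) m]
    rw [δ_H_eqToHom_comm T H (show (i + 1) + (j + 1) = i + (j + 1) + 1 by omega) m]
    rw [← Category.assoc, key]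
    simp only [Preadditive.neg_comp, Category.assoc]
    rw [IH2]
    simp only [Preadditive.comp_zsmul, Preadditive.zsmul_comp, pow_succ, mul_smul,
      neg_smul, one_smul, mul_neg, mul_one, neg_neg, Category.assoc]
    simp only [Preadditive.comp_neg, neg_neg, Preadditive.comp_zsmul]

end MainClaim

section OmegaDelta

variable {X : ShortComplex C} {hX : X.ShortExact}

lemma ε_hX_eq (T : CohomFunctor C D) (SS : SatelliteSystem T) (H : HorseshoeData hX)
    (j : ℕ) (m : ℤ) :
    SS.ε hX j m =
      eqToHom (congrArg (SS.S (j + 1) m).obj H.RC.Mt_zero.symm) ≫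
        SS.ε (H.shortExact 0) j m ≫
          eqToHom (congrArg (SS.S j m).obj H.RA.Mt_zero) := by
  have hnat := SS.ε_natural hX (H.shortExact 0)
    { τ₁ := eqToHom H.RA.Mt_zero.symm, τ₂ := eqToHom H.RB.Mt_zero.symm,
      τ₃ := eqToHom H.RC.Mt_zero.symm,
      comm₁₂ := by
        show eqToHom H.RA.Mt_zero.symm ≫ H.f 0 = X.f ≫ eqToHom H.RB.Mt_zero.symm
        rw [H.f_zero]
        simp,
      comm₂₃ := by
        show eqToHom H.RB.Mt_zero.symm ≫ H.g 0 = X.g ≫ eqToHom H.RC.Mt_zero.symm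
        rw [H.g_zero]
        simp } j m
  simp only [eqToHom_map] at hnat
  rw [← Category.assoc, hnat]
  simp

/-- `main_claim` specialised at offset `0`, with indices normalised. -/
lemma main_claim_zero (T : CohomFunctor C D) (SS : SatelliteSystem T) (H : HorseshoeData hX)
    (j : ℕ) (m : ℤ) :
    SS.ε (H.shortExact 0) j m ≫ oeps SS H.RA m j 0 ≫
        eqToHom (congrArg (fun i : ℕ => (T.T m).obj (H.RA.Mt i)) (Nat.zero_add j)) ≫
        T.δ (H.RA.shortExact j) m =
      ((-1 : ℤ) ^ (j + 1)) • (oeps SS H.RC m (j + 1) 0 ≫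
        eqToHom (congrArg (fun i : ℕ => (T.T m).obj (H.RC.Mt i)) (Nat.zero_add (j + 1))) ≫
        T.δ (H.shortExact (j + 1)) m) := by
  have MC := main_claim T SS H j 0 m =≫
    eqToHom (congrArg (fun i : ℕ => (T.T (m + 1)).obj (H.RA.Mt (i + 1))) (Nat.zero_add j))
  simp only [Preadditive.zsmul_comp, Category.assoc] at MC
  rw [δ_syz_eqToHom_comm T H.RA (Nat.zero_add j) m, MC,
    δ_H_eqToHom_comm T H (show 0 + j + 1 = j + 1 by omega) m]

/-- Commutation of `ω` with the connecting homomorphisms, at the level of the components of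
the direct systems (Lemma 4.6 of the paper). -/
lemma omega_delta_comm (T : CohomFunctor C D) (SS : SatelliteSystem T)
    (H : HorseshoeData hX) (n : ℤ) (j : ℕ) :
    SS.ε hX j (n + ((j + 1 : ℕ) : ℤ)) ≫
      eqToHom (congrArg (fun m : ℤ => (SS.S j m).obj X.X₁)
        (show n + ((j + 1 : ℕ) : ℤ) = (n + 1) + (j : ℤ) by push_cast; ring)) ≫
      omegaComp SS H.RA (n + 1) j ≫ resMap T H.RA (n + 1) j =
    omegaComp SS H.RC n (j + 1) ≫
      (((-1 : ℤ) ^ (j + 1)) • T.δ (H.shortExact (j + 1)) (n + ((j + 1 : ℕ) : ℤ))) ≫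
      eqToHom (congrArg (fun m : ℤ => (T.T m).obj (H.RA.Mt (j + 1)))
        (show n + ((j + 1 : ℕ) : ℤ) + 1 = (n + 1) + ((j + 1 : ℕ) : ℤ) by push_cast; ring)) := by
  have hdeg : (n + 1) + (j : ℤ) = n + ((j + 1 : ℕ) : ℤ) := by push_cast; ring
  have MCZ := main_claim_zero T SS H j (n + ((j + 1 : ℕ) : ℤ)) =≫
    eqToHom (congrArg (fun m : ℤ => (T.T m).obj (H.RA.Mt (j + 1)))
      (show n + ((j + 1 : ℕ) : ℤ) + 1 = (n + 1) + ((j + 1 : ℕ) : ℤ) by push_cast; ring))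
  simp only [Preadditive.zsmul_comp, Category.assoc] at MCZ
  rw [ε_hX_eq T SS H]
  simp only [omegaComp, resMap]
  dsimp only [resObj, SatelliteSystem.obj]
  rw [oeps_deg_congr SS H.RA hdeg j 0, δ_deg_congr T (H.RA.shortExact j) hdeg]
  simp only [Category.assoc, eqToHom_trans, eqToHom_trans_assoc, eqToHom_refl,
    id_comp, comp_id, Preadditive.comp_zsmul, Preadditive.zsmul_comp]
  rw [MCZ]
  simp only [Preadditive.comp_zsmul, Category.assoc, eqToHom_trans, eqToHom_trans_assoc,
    eqToHom_refl, id_comp, comp_id]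

end OmegaDelta

/-- Definition 4.5 / Lemma 4.6. For a short exact sequence
`0 → A → B → C → 0` in `C` with Horseshoe-compatible syzygy sequences
`0 → Ã_k → B̃_k → C̃_k → 0`: the squares formed by the connecting homomorphisms `δ^{n+k}` of
the syzygy short exact sequences and the transition maps of the resolution construction
anticommute; hence `δ̃^n := colim_{k} (−1)^k δ^{n+k} : T_Res^n(C) ⟶ T_Res^{n+1}(A)` is
well-defined; and the square relating `δ̃^n` and `δ̂^n` over the isomorphisms `ω_n`, `ω_{n+1}`
commutes. -/
theorem resolution_connecting_homomorphism
    {C : Type u} [Category.{v} C] [Abelian C] [EnoughProjectives C]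
    {D : Type u'} [Category.{v'} D] [Abelian D]
    [HasColimitsOfShape ℕ D] [PreservesFiniteLimits (colim : (ℕ ⥤ D) ⥤ D)]
    (T : CohomFunctor C D) (SS : SatelliteSystem T)
    {X : ShortComplex C} (hX : X.ShortExact) (H : HorseshoeData hX) (n : ℤ)
    (L₁C : D) (ι₁C : ∀ k, SS.obj n X.X₃ k ⟶ L₁C)
    (h₁C : IsDirectLimit (SS.map n X.X₃) L₁C ι₁C)
    (L₁A : D) (ι₁A : ∀ k, SS.obj (n + 1) X.X₁ k ⟶ L₁A)
    (h₁A : IsDirectLimit (SS.map (n + 1) X.X₁) L₁A ι₁A)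
    (L₂C : D) (ι₂C : ∀ k, resObj T H.RC n k ⟶ L₂C)
    (h₂C : IsDirectLimit (resMap T H.RC n) L₂C ι₂C)
    (L₂A : D) (ι₂A : ∀ k, resObj T H.RA (n + 1) k ⟶ L₂A)
    (h₂A : IsDirectLimit (resMap T H.RA (n + 1)) L₂A ι₂A)
    -- `δ̂^n : T̂^n(C) ⟶ T̂^{n+1}(A)`, the connecting homomorphism of the satellite functor
    -- construction, given by the formula `δ̂^n = colim ε^{-k}` of Theorem 3.6:
    (dhat : L₁C ⟶ L₁A)
    (hdhat : ∀ k, ι₁C (k + 1) ≫ dhat =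
      SS.ε hX k (n + ((k + 1 : ℕ) : ℤ)) ≫
        eqToHom (congrArg (fun m : ℤ => (SS.S k m).obj X.X₁)
          (show n + ((k + 1 : ℕ) : ℤ) = (n + 1) + (k : ℤ) by push_cast; ring)) ≫ ι₁A k)
    (ωC : L₁C ⟶ L₂C) (hωC : ∀ k, ι₁C k ≫ ωC = omegaComp SS H.RC n k ≫ ι₂C k)
    (ωA : L₁A ⟶ L₂A) (hωA : ∀ k, ι₁A k ≫ ωA = omegaComp SS H.RA (n + 1) k ≫ ι₂A k) :
    (∀ k : ℕ,
      T.δ (H.shortExact k) (n + (k : ℤ)) ≫ T.δ (H.RA.shortExact k) (n + (k : ℤ) + 1) =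
        -(T.δ (H.RC.shortExact k) (n + (k : ℤ)) ≫
            T.δ (H.shortExact (k + 1)) (n + (k : ℤ) + 1))) ∧
    (∃! u : L₂C ⟶ L₂A, ∀ k,
      ι₂C k ≫ u = (((-1 : ℤ) ^ k) • T.δ (H.shortExact k) (n + (k : ℤ))) ≫
        eqToHom (congrArg (fun m : ℤ => (T.T m).obj (H.RA.Mt k))
          (show n + (k : ℤ) + 1 = (n + 1) + (k : ℤ) by ring)) ≫ ι₂A k) ∧
    (∀ u : L₂C ⟶ L₂A,
      (∀ k, ι₂C k ≫ u = (((-1 : ℤ) ^ k) • T.δ (H.shortExact k) (n + (k : ℤ))) ≫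
        eqToHom (congrArg (fun m : ℤ => (T.T m).obj (H.RA.Mt k))
          (show n + (k : ℤ) + 1 = (n + 1) + (k : ℤ) by ring)) ≫ ι₂A k) →
      ωC ≫ u = dhat ≫ ωA) := by
  -- Part 1: anticommutativity of the connecting homomorphisms
  have part1 : ∀ k : ℕ,
      T.δ (H.shortExact k) (n + (k : ℤ)) ≫ T.δ (H.RA.shortExact k) (n + (k : ℤ) + 1) =
        -(T.δ (H.RC.shortExact k) (n + (k : ℤ)) ≫
            T.δ (H.shortExact (k + 1)) (n + (k : ℤ) + 1)) := fun k =>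
    horseshoe_anticommute H k (T.additive (n + (k : ℤ) + 1))
      (d₁ := fun {Y} hY => T.δ hY (n + (k : ℤ)))
      (d₂ := fun {Y} hY => T.δ hY (n + (k : ℤ) + 1))
      (fun hY hZ φ => T.δ_natural hY hZ φ _)
      (fun hY hZ φ => T.δ_natural hY hZ φ _)
  -- the cocone family `(-1)^k δ^{n+k}` on the resolution system of `C`
  have compat : ∀ k, resMap T H.RC n k ≫
      ((((-1 : ℤ) ^ (k + 1)) • T.δ (H.shortExact (k + 1)) (n + ((k + 1 : ℕ) : ℤ))) ≫
        eqToHom (congrArg (fun m : ℤ => (T.T m).obj (H.RA.Mt (k + 1)))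
          (show n + ((k + 1 : ℕ) : ℤ) + 1 = (n + 1) + ((k + 1 : ℕ) : ℤ) by push_cast; ring)) ≫
            ι₂A (k + 1)) =
      ((((-1 : ℤ) ^ k) • T.δ (H.shortExact k) (n + (k : ℤ))) ≫
        eqToHom (congrArg (fun m : ℤ => (T.T m).obj (H.RA.Mt k))
          (show n + (k : ℤ) + 1 = (n + 1) + (k : ℤ) by ring)) ≫ ι₂A k) := by
    intro k
    have hδH := δ_deg_congr T (H.shortExact (k + 1))
      (show n + ((k + 1 : ℕ) : ℤ) = n + (k : ℤ) + 1 from (cast_step n k).symm)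
    have hδA := δ_deg_congr T (H.RA.shortExact k)
      (show (n + 1) + (k : ℤ) = n + (k : ℤ) + 1 by ring)
    have hι : ι₂A k = resMap T H.RA (n + 1) k ≫ ι₂A (k + 1) := (h₂A.comm k).symm
    have hp2 : ∀ {Z : D} (w : (T.T (n + (k : ℤ) + 1 + 1)).obj (H.RA.Mt (k + 1)) ⟶ Z),
        T.δ (H.shortExact k) (n + (k : ℤ)) ≫
          T.δ (H.RA.shortExact k) (n + (k : ℤ) + 1) ≫ w =
        -(T.δ (H.RC.shortExact k) (n + (k : ℤ)) ≫
            T.δ (H.shortExact (k + 1)) (n + (k : ℤ) + 1) ≫ w) := by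
      intro Z w
      rw [← Category.assoc, part1 k]
      simp only [Preadditive.neg_comp, Category.assoc]
    rw [hδH, hι]
    generalize ι₂A (k + 1) = w
    dsimp only [resMap, resObj] at w ⊢
    simp only [resMap, Preadditive.zsmul_comp, Preadditive.comp_zsmul, Category.assoc,
      eqToHom_trans, eqToHom_trans_assoc, eqToHom_refl, id_comp, comp_id]
    rw [hδA]
    simp only [Preadditive.zsmul_comp, Preadditive.comp_zsmul, Category.assoc,
      eqToHom_trans, eqToHom_trans_assoc, eqToHom_refl, id_comp, comp_id]
    rw [hp2]
    simp only [pow_succ, mul_smul, neg_smul, one_smul, smul_neg, neg_neg]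
  obtain ⟨u₀, hu₀, hu₀uniq⟩ := h₂C.desc L₂A
    (fun k => (((-1 : ℤ) ^ k) • T.δ (H.shortExact k) (n + (k : ℤ))) ≫
      eqToHom (congrArg (fun m : ℤ => (T.T m).obj (H.RA.Mt k))
        (show n + (k : ℤ) + 1 = (n + 1) + (k : ℤ) by ring)) ≫ ι₂A k)
    compat
  refine ⟨part1, ⟨u₀, hu₀, hu₀uniq⟩, ?_⟩
  -- Part 3: compatibility of `ω` with `δ̂` and `δ̃`
  intro u hu
  obtain ⟨w₀, hw₀, hw₀uniq⟩ := h₁C.desc L₂A (fun k => ι₁C k ≫ (dhat ≫ ωA))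
    (fun k => by rw [← Category.assoc, h₁C.comm k])
  have hkey : ∀ j : ℕ, ι₁C (j + 1) ≫ (ωC ≫ u) = ι₁C (j + 1) ≫ (dhat ≫ ωA) := by
    intro j
    have hodc := omega_delta_comm T SS H n j =≫ ι₂A (j + 1)
    simp only [Category.assoc] at hodc
    have hL : ι₁C (j + 1) ≫ (ωC ≫ u) =
        omegaComp SS H.RC n (j + 1) ≫
          (((-1 : ℤ) ^ (j + 1)) • T.δ (H.shortExact (j + 1)) (n + ((j + 1 : ℕ) : ℤ))) ≫
          eqToHom (congrArg (fun m : ℤ => (T.T m).obj (H.RA.Mt (j + 1)))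
            (show n + ((j + 1 : ℕ) : ℤ) + 1 = (n + 1) + ((j + 1 : ℕ) : ℤ) by
              push_cast; ring)) ≫ ι₂A (j + 1) := by
      rw [← Category.assoc, hωC (j + 1), Category.assoc, hu (j + 1)]
      rfl
    have hR : ι₁C (j + 1) ≫ (dhat ≫ ωA) =
        SS.ε hX j (n + ((j + 1 : ℕ) : ℤ)) ≫
          eqToHom (congrArg (fun m : ℤ => (SS.S j m).obj X.X₁)
            (show n + ((j + 1 : ℕ) : ℤ) = (n + 1) + (j : ℤ) by push_cast; ring)) ≫
          omegaComp SS H.RA (n + 1) j ≫ resMap T H.RA (n + 1) j ≫ ι₂A (j + 1) := by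
      rw [← Category.assoc, ← Category.assoc, hdhat j]
      simp only [Category.assoc]
      exact (Category.assoc _ _ _).trans (whisker_eq _ ((Category.assoc _ _ _).trans
        (whisker_eq _ ((hωA j).trans (whisker_eq _ (h₂A.comm j).symm)))))
    rw [hL, hR]
    exact ((Category.assoc _ _ _).trans (whisker_eq _ (Category.assoc _ _ _))).symm.trans
      (hodc.symm.trans (whisker_eq _ (whisker_eq _ (Category.assoc _ _ _))))
  have hcomp : ∀ k, ι₁C k ≫ (ωC ≫ u) = ι₁C k ≫ (dhat ≫ ωA) := by
    intro k
    cases k with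
    | zero =>
      rw [← h₁C.comm 0]
      simp only [Category.assoc]
      rw [hkey 0]
    | succ j => exact hkey j
  have h1 : ωC ≫ u = w₀ := hw₀uniq _ hcomp
  have h2 : dhat ≫ ωA = w₀ := hw₀uniq _ (fun k => rfl)
  rw [h1, h2]


end Mislin
end

section
/- Define on {0,1}^ℕ the relation a ∼ b if and only if for every k ∈ ℕ there exists K ≥ k such that Σ_{i=1}^K a_i = Σ_{i=1}^K b_i, and let ∼' be the transitive closure of ∼. Then the quotient {0,1}^ℕ/∼' is countably infinite. Consequently, there are countably many distinct constructions of Mislin completions of the form (T_a^•, δ̃_a^•), where two constructions for a, b ∈ {0,1}^ℕ agree if there is an infinite subset Λ ⊆ ℕ with Σ_{i=1}^λ a_i = Σ_{i=1}^λ b_i for all λ ∈ Λ. -/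
namespace Mislin

/-- The partial sum `P(a)_K = Σ_{i=1}^K a_i` of a sequence `a ∈ {0,1}^ℕ` (indexed so that
`a 1, a 2, …` are the entries of the sequence). -/
def psum (a : ℕ → Bool) (K : ℕ) : ℕ :=
  ∑ i ∈ Finset.range K, (a (i + 1)).toNat

/-- `a ∼ b` iff for every `k` there is `K ≥ k` with `Σ_{i=1}^K a_i = Σ_{i=1}^K b_i`. -/
def sim (a b : ℕ → Bool) : Prop :=
  ∀ k : ℕ, ∃ K : ℕ, k ≤ K ∧ psum a K = psum b K

/-- Two constructions of Mislin completions agree iff there is an infinite subset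
`Λ ⊆ ℕ` on which the partial sums of `a` and `b` coincide. -/
def agree (a b : ℕ → Bool) : Prop :=
  ∃ Λ : Set ℕ, Λ.Infinite ∧ ∀ l ∈ Λ, psum a l = psum b l

/-! ### Basic lemmas about `psum` -/

lemma psum_zero (a : ℕ → Bool) : psum a 0 = 0 := rfl

lemma psum_succ (a : ℕ → Bool) (k : ℕ) :
    psum a (k + 1) = psum a k + (a (k + 1)).toNat :=
  Finset.sum_range_succ _ _

lemma psum_succ_le (a : ℕ → Bool) (k : ℕ) : psum a (k + 1) ≤ psum a k + 1 := by
  rw [psum_succ]; cases a (k + 1) <;> simp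

lemma psum_mono (a : ℕ → Bool) : Monotone (psum a) := by
  apply monotone_nat_of_le_succ
  intro k; rw [psum_succ]; omega

lemma psum_le_self (a : ℕ → Bool) (k : ℕ) : psum a k ≤ k := by
  induction k with
  | zero => simp [psum_zero]
  | succ k ih => have := psum_succ_le a k; omega

lemma sim_symm {a b : ℕ → Bool} (h : sim a b) : sim b a := by
  intro k; obtain ⟨K, hK, he⟩ := h k; exact ⟨K, hK, he.symm⟩

/-! ### Transfer lemmas for monotone functions that agree infinitely often -/

lemma bdd_transfer (f g : ℕ → ℕ) (hg : Monotone g)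
    (h : ∀ k, ∃ K, k ≤ K ∧ f K = g K) (hf : BddAbove (Set.range f)) :
    BddAbove (Set.range g) := by
  obtain ⟨n, hn⟩ := hf
  refine ⟨n, ?_⟩
  rintro x ⟨k, rfl⟩
  obtain ⟨K, hK, he⟩ := h k
  calc g k ≤ g K := hg hK
    _ = f K := he.symm
    _ ≤ n := hn ⟨K, rfl⟩

lemma sup_le_transfer (f g : ℕ → ℕ) (hf : Monotone f) (hgb : BddAbove (Set.range g))
    (h : ∀ k, ∃ K, k ≤ K ∧ f K = g K) :
    (⨆ i, f i) ≤ ⨆ i, g i := by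
  apply ciSup_le
  intro k
  obtain ⟨K, hK, he⟩ := h k
  calc f k ≤ f K := hf hK
    _ = g K := he
    _ ≤ ⨆ i, g i := le_ciSup hgb K

lemma eventually_sup (f : ℕ → ℕ) (hf : Monotone f) (hb : BddAbove (Set.range f)) :
    ∃ N, ∀ k, N ≤ k → f k = ⨆ i, f i := by
  obtain ⟨N, hN⟩ : ∃ N, f N = ⨆ i, f i := by
    obtain ⟨k, hk⟩ := Nat.sSup_mem (Set.range_nonempty f) hb
    exact ⟨k, by rw [hk]; rfl⟩
  refine ⟨N, fun k hk => le_antisymm (le_ciSup hb k) ?_⟩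
  rw [← hN]; exact hf hk

/-! ### The invariant -/

open Classical in
/-- Complete invariant: number of ones if finite, else number of zeros if finite, else `()`. -/
noncomputable def phi (a : ℕ → Bool) : ℕ ⊕ ℕ ⊕ Unit :=
  if BddAbove (Set.range (psum a)) then .inl (⨆ k, psum a k)
  else if BddAbove (Set.range (fun k => k - psum a k)) then .inr (.inl (⨆ k, k - psum a k))
  else .inr (.inr ())

lemma zc_mono (a : ℕ → Bool) : Monotone (fun k => k - psum a k) := by
  apply monotone_nat_of_le_succ
  intro k
  have h1 := psum_succ_le a k
  have h2 := psum_le_self a k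
  show k - psum a k ≤ k + 1 - psum a (k + 1)
  omega

lemma phi_sim {a b : ℕ → Bool} (h : sim a b) : phi a = phi b := by
  have hab : ∀ k, ∃ K, k ≤ K ∧ psum a K = psum b K := h
  have hba : ∀ k, ∃ K, k ≤ K ∧ psum b K = psum a K := sim_symm h
  have hzab : ∀ k, ∃ K, k ≤ K ∧ K - psum a K = K - psum b K := by
    intro k; obtain ⟨K, hK, he⟩ := h k; exact ⟨K, hK, by rw [he]⟩
  have hzba : ∀ k, ∃ K, k ≤ K ∧ K - psum b K = K - psum a K := by
    intro k; obtain ⟨K, hK, he⟩ := h k; exact ⟨K, hK, by rw [he]⟩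
  by_cases Ba : BddAbove (Set.range (psum a))
  · have Bb : BddAbove (Set.range (psum b)) := bdd_transfer _ _ (psum_mono b) hab Ba
    have hsup : (⨆ k, psum a k) = ⨆ k, psum b k :=
      le_antisymm (sup_le_transfer _ _ (psum_mono a) Bb hab)
        (sup_le_transfer _ _ (psum_mono b) Ba hba)
    simp [phi, Ba, Bb, hsup]
  · have Bb : ¬ BddAbove (Set.range (psum b)) := fun Bb =>
      Ba (bdd_transfer _ _ (psum_mono a) hba Bb)
    by_cases Za : BddAbove (Set.range (fun k => k - psum a k))
    · have Zb : BddAbove (Set.range (fun k => k - psum b k)) :=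
        bdd_transfer _ _ (zc_mono b) hzab Za
      have hsup : (⨆ k, k - psum a k) = ⨆ k, k - psum b k :=
        le_antisymm (sup_le_transfer _ _ (zc_mono a) Zb hzab)
          (sup_le_transfer _ _ (zc_mono b) Za hzba)
      simp [phi, Ba, Bb, Za, Zb, hsup]
    · have Zb : ¬ BddAbove (Set.range (fun k => k - psum b k)) := fun Zb =>
        Za (bdd_transfer _ _ (zc_mono a) hzba Zb)
      simp [phi, Ba, Bb, Za, Zb]

/-! ### The chasing construction -/

/-- State of the chase: current height and which of the two targets we are chasing. -/
def st (p q : ℕ → ℕ) : ℕ → ℕ × Bool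
  | 0 => (0, true)
  | k + 1 =>
    if (st p q k).1 = (if (st p q k).2 then p k else q k) then ((st p q k).1, !(st p q k).2)
    else if (st p q k).1 < (if (st p q k).2 then p k else q k) then
      ((st p q k).1 + 1, (st p q k).2)
    else st p q k

section Chase

variable (p q : ℕ → ℕ)
variable (hpm : Monotone p) (hps : ∀ k, p (k + 1) ≤ p k + 1)
  (hpu : ∀ n, ∃ k, n < p k) (hpz : ∀ n, ∃ k, n < k - p k)
  (hqm : Monotone q) (hqs : ∀ k, q (k + 1) ≤ q k + 1)
  (hqu : ∀ n, ∃ k, n < q k) (hqz : ∀ n, ∃ k, n < k - q k)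

/-- Abbreviation for the target value at time `k`. -/
def tgt (k : ℕ) : ℕ := if (st p q k).2 then p k else q k

lemma st_succ_of_eq {k : ℕ} (h : (st p q k).1 = tgt p q k) :
    st p q (k + 1) = ((st p q k).1, !(st p q k).2) := by
  unfold tgt at h
  rw [st, if_pos h]

lemma st_succ_of_lt {k : ℕ} (h : (st p q k).1 ≠ tgt p q k) (h2 : (st p q k).1 < tgt p q k) :
    st p q (k + 1) = ((st p q k).1 + 1, (st p q k).2) := by
  unfold tgt at h h2
  rw [st, if_neg h, if_pos h2]

lemma st_succ_of_gt {k : ℕ} (h : (st p q k).1 ≠ tgt p q k) (h2 : tgt p q k < (st p q k).1) :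
    st p q (k + 1) = st p q k := by
  unfold tgt at h h2
  rw [st, if_neg h, if_neg (by omega)]

lemma st_fst_step (k : ℕ) :
    (st p q (k + 1)).1 = (st p q k).1 ∨ (st p q (k + 1)).1 = (st p q k).1 + 1 := by
  rcases eq_or_ne (st p q k).1 (tgt p q k) with h | h
  · rw [st_succ_of_eq p q h]; left; rfl
  · rcases lt_or_gt_of_ne h with h2 | h2
    · rw [st_succ_of_lt p q h h2]; right; rfl
    · rw [st_succ_of_gt p q h h2]; left; rfl

lemma st_snd_of_no_meet {k : ℕ} (h : (st p q k).1 ≠ tgt p q k) :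
    (st p q (k + 1)).2 = (st p q k).2 := by
  rcases lt_or_gt_of_ne h with h2 | h2
  · rw [st_succ_of_lt p q h h2]
  · rw [st_succ_of_gt p q h h2]

include hpm hps hpz hpu hqm hqs hqz hqu in
lemma exists_meet (k : ℕ) : ∃ K, k ≤ K ∧ (st p q K).1 = tgt p q K := by
  by_contra hcon
  push_neg at hcon
  have hmode : ∀ d, (st p q (k + d)).2 = (st p q k).2 := by
    intro d
    induction d with
    | zero => rfl
    | succ d ih =>
      have hne : (st p q (k + d)).1 ≠ tgt p q (k + d) := hcon (k + d) (by omega)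
      rw [show k + (d + 1) = (k + d) + 1 by omega, st_snd_of_no_meet p q hne, ih]
  set T : ℕ → ℕ := if (st p q k).2 then p else q with hT
  have hTm : Monotone T := by rw [hT]; split <;> assumption
  have hTs : ∀ j, T (j + 1) ≤ T j + 1 := by rw [hT]; split <;> assumption
  have hTu : ∀ n, ∃ j, n < T j := by rw [hT]; split <;> assumption
  have hTz : ∀ n, ∃ j, n < j - T j := by rw [hT]; split <;> assumption
  have htgt : ∀ d, tgt p q (k + d) = T (k + d) := by
    intro d
    rw [tgt, hmode d, hT]
    split <;> rfl
  have hzm : Monotone (fun j => j - T j) := by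
    apply monotone_nat_of_le_succ
    intro j
    have := hTs j
    show j - T j ≤ j + 1 - T (j + 1)
    omega
  have hne0 : (st p q k).1 ≠ T k := by
    have := hcon k le_rfl
    rwa [show k = k + 0 by omega, htgt 0] at this
  rcases lt_or_gt_of_ne hne0 with hlt | hgt
  · -- chasing from below: height climbs by 1 each step, target has too many pauses
    have key : ∀ d, (st p q (k + d)).1 = (st p q k).1 + d ∧ (st p q k).1 + d < T (k + d) := by
      intro d
      induction d with
      | zero => exact ⟨rfl, by simpa using hlt⟩
      | succ d ih =>
        obtain ⟨ih1, ih2⟩ := ih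
        have hne : (st p q (k + d)).1 ≠ tgt p q (k + d) := hcon (k + d) (by omega)
        have hlt' : (st p q (k + d)).1 < tgt p q (k + d) := by
          rw [htgt d]; omega
        have hstep := st_succ_of_lt p q hne hlt'
        have h1 : (st p q (k + (d + 1))).1 = (st p q k).1 + (d + 1) := by
          rw [show k + (d + 1) = (k + d) + 1 by omega, hstep]; simp; omega
        refine ⟨h1, ?_⟩
        have hne2 : (st p q (k + (d + 1))).1 ≠ tgt p q (k + (d + 1)) :=
          hcon (k + (d + 1)) (by omega)
        rw [htgt (d + 1), h1] at hne2
        have hle : T (k + d) ≤ T (k + (d + 1)) := hTm (by omega)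
        omega
    obtain ⟨j, hj⟩ := hTz (k + (st p q k).1 + 1)
    have hjk : k ≤ j := by
      have := Nat.sub_le j (T j)
      omega
    have := (key (j - k)).2
    rw [show k + (j - k) = j by omega] at this
    omega
  · -- waiting from above: height stays put, target is unbounded
    have key : ∀ d, (st p q (k + d)).1 = (st p q k).1 ∧ T (k + d) < (st p q k).1 := by
      intro d
      induction d with
      | zero => exact ⟨rfl, by simpa using hgt⟩
      | succ d ih =>
        obtain ⟨ih1, ih2⟩ := ih
        have hne : (st p q (k + d)).1 ≠ tgt p q (k + d) := hcon (k + d) (by omega)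
        have hgt' : tgt p q (k + d) < (st p q (k + d)).1 := by
          rw [htgt d]; omega
        have hstep := st_succ_of_gt p q hne hgt'
        have h1 : (st p q (k + (d + 1))).1 = (st p q k).1 := by
          rw [show k + (d + 1) = (k + d) + 1 by omega, hstep, ih1]
        refine ⟨h1, ?_⟩
        have hne2 : (st p q (k + (d + 1))).1 ≠ tgt p q (k + (d + 1)) :=
          hcon (k + (d + 1)) (by omega)
        rw [htgt (d + 1), h1] at hne2
        have hle : T (k + d) ≤ T (k + (d + 1)) := hTm (by omega)
        have hle2 : T (k + (d + 1)) ≤ T (k + d) + 1 := by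
          have := hTs (k + d)
          rwa [show (k + d) + 1 = k + (d + 1) by omega] at this
        omega
    obtain ⟨j, hj⟩ := hTu ((st p q k).1)
    have hj2 : T (max j k) < (st p q k).1 := by
      have := (key (max j k - k)).2
      rwa [show k + (max j k - k) = max j k by omega] at this
    have := hTm (le_max_left j k)
    omega

include hpm hps hpz hpu hqm hqs hqz hqu in
lemma exists_meet_mode (m : Bool) (k : ℕ) :
    ∃ K, k ≤ K ∧ (st p q K).2 = m ∧ (st p q K).1 = (if m then p K else q K) := by
  classical
  -- first meet at or after k
  have H1 : ∃ n, k ≤ n ∧ (st p q n).1 = tgt p q n :=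
    exists_meet p q hpm hps hpu hpz hqm hqs hqu hqz k
  set P1 : ℕ → Prop := fun n => k ≤ n ∧ (st p q n).1 = tgt p q n with hP1
  have H1' : ∃ n, P1 n := H1
  let K1 := Nat.find H1'
  obtain ⟨hK1k, hK1meet⟩ : P1 K1 := Nat.find_spec H1'
  by_cases hm : (st p q K1).2 = m
  · exact ⟨K1, hK1k, hm, by rw [hK1meet, tgt, hm]⟩
  · -- mode flips after the meet at K1
    have hflip : (st p q (K1 + 1)).2 = m := by
      rw [st_succ_of_eq p q hK1meet]
      cases m <;> revert hm <;> cases h2 : (st p q K1).2 <;> simp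
    have H2 : ∃ n, K1 + 1 ≤ n ∧ (st p q n).1 = tgt p q n :=
      exists_meet p q hpm hps hpu hpz hqm hqs hqu hqz (K1 + 1)
    set P2 : ℕ → Prop := fun n => K1 + 1 ≤ n ∧ (st p q n).1 = tgt p q n with hP2
    have H2' : ∃ n, P2 n := H2
    let K2 := Nat.find H2'
    obtain ⟨hK2k, hK2meet⟩ : P2 K2 := Nat.find_spec H2'
    have hnomeet : ∀ j, K1 + 1 ≤ j → j < K2 → (st p q j).1 ≠ tgt p q j := by
      intro j hj1 hj2 hmeet
      exact Nat.find_min H2' hj2 ⟨hj1, hmeet⟩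
    have hconst : ∀ d, K1 + 1 + d ≤ K2 → (st p q (K1 + 1 + d)).2 = m := by
      intro d
      induction d with
      | zero => intro _; exact hflip
      | succ d ih =>
        intro hd
        have hne := hnomeet (K1 + 1 + d) (by omega) (by omega)
        rw [show K1 + 1 + (d + 1) = (K1 + 1 + d) + 1 by omega, st_snd_of_no_meet p q hne,
          ih (by omega)]
    have hK2mode : (st p q K2).2 = m := by
      have := hconst (K2 - (K1 + 1)) (by omega)
      rwa [show K1 + 1 + (K2 - (K1 + 1)) = K2 by omega] at this
    exact ⟨K2, by omega, hK2mode, by rw [hK2meet, tgt, hK2mode]⟩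

end Chase

/-- The sequence whose partial sums realize the chase heights. -/
def chaseSeq (p q : ℕ → ℕ) : ℕ → Bool := fun i =>
  match i with
  | 0 => false
  | j + 1 => decide ((st p q j).1 < (st p q (j + 1)).1)

lemma psum_chaseSeq (p q : ℕ → ℕ) (K : ℕ) : psum (chaseSeq p q) K = (st p q K).1 := by
  induction K with
  | zero => rfl
  | succ K ih =>
    rw [psum_succ, ih]
    rcases st_fst_step p q K with h | h
    · rw [h]
      have : chaseSeq p q (K + 1) = false := by
        simp [chaseSeq]; omega
      simp [this]
    · rw [h]
      have : chaseSeq p q (K + 1) = true := by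
        simp [chaseSeq]; omega
      simp [this]

/-! ### From unboundedness of `¬BddAbove` -/

lemma unbdd_of_not_bddAbove {f : ℕ → ℕ} (h : ¬ BddAbove (Set.range f)) :
    ∀ n, ∃ k, n < f k := by
  intro n
  obtain ⟨y, ⟨k, rfl⟩, hy⟩ := not_bddAbove_iff.mp h n
  exact ⟨k, hy⟩

/-- Two doubly-infinite sequences are connected through the chase. -/
lemma transGen_of_unbdd (a b : ℕ → Bool)
    (ha : ¬ BddAbove (Set.range (psum a)))
    (hza : ¬ BddAbove (Set.range (fun k => k - psum a k)))
    (hb : ¬ BddAbove (Set.range (psum b)))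
    (hzb : ¬ BddAbove (Set.range (fun k => k - psum b k))) :
    Relation.TransGen sim a b := by
  set p := psum a with hp
  set q := psum b with hq
  have hpu := unbdd_of_not_bddAbove ha
  have hpz := unbdd_of_not_bddAbove hza
  have hqu := unbdd_of_not_bddAbove hb
  have hqz := unbdd_of_not_bddAbove hzb
  set c := chaseSeq p q with hc
  have hac : sim a c := by
    intro k
    obtain ⟨K, hK, _, hmeet⟩ :=
      exists_meet_mode p q (psum_mono a) (psum_succ_le a) hpu hpz
        (psum_mono b) (psum_succ_le b) hqu hqz true k
    refine ⟨K, hK, ?_⟩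
    rw [psum_chaseSeq]
    simpa using hmeet.symm
  have hcb : sim c b := by
    intro k
    obtain ⟨K, hK, _, hmeet⟩ :=
      exists_meet_mode p q (psum_mono a) (psum_succ_le a) hpu hpz
        (psum_mono b) (psum_succ_le b) hqu hqz false k
    refine ⟨K, hK, ?_⟩
    rw [psum_chaseSeq]
    simpa using hmeet
  exact Relation.TransGen.head hac (Relation.TransGen.single hcb)

/-! ### Converse: equal invariant implies related -/

lemma transGen_of_phi_eq {a b : ℕ → Bool} (h : phi a = phi b) :
    Relation.TransGen sim a b := by
  by_cases Ba : BddAbove (Set.range (psum a)) <;>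
    by_cases Bb : BddAbove (Set.range (psum b))
  · -- both have finitely many ones
    have hsup : (⨆ k, psum a k) = ⨆ k, psum b k := by
      simp [phi, Ba, Bb] at h; exact h
    obtain ⟨Na, hNa⟩ := eventually_sup _ (psum_mono a) Ba
    obtain ⟨Nb, hNb⟩ := eventually_sup _ (psum_mono b) Bb
    apply Relation.TransGen.single
    intro k
    refine ⟨max k (max Na Nb), le_max_left _ _, ?_⟩
    rw [hNa _ (by omega), hNb _ (by omega), hsup]
  · exfalso
    by_cases Zb : BddAbove (Set.range (fun k => k - psum b k)) <;> simp [phi, Ba, Bb, Zb] at h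
  · exfalso
    by_cases Za : BddAbove (Set.range (fun k => k - psum a k)) <;> simp [phi, Ba, Bb, Za] at h
  · by_cases Za : BddAbove (Set.range (fun k => k - psum a k)) <;>
      by_cases Zb : BddAbove (Set.range (fun k => k - psum b k))
    · -- both have finitely many zeros
      have hsup : (⨆ k, k - psum a k) = ⨆ k, k - psum b k := by
        simp [phi, Ba, Bb, Za, Zb] at h; exact h
      obtain ⟨Na, hNa⟩ := eventually_sup _ (zc_mono a) Za
      obtain ⟨Nb, hNb⟩ := eventually_sup _ (zc_mono b) Zb
      apply Relation.TransGen.single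
      intro k
      refine ⟨max k (max Na Nb), le_max_left _ _, ?_⟩
      have h1 := hNa (max k (max Na Nb)) (by omega)
      have h2 := hNb (max k (max Na Nb)) (by omega)
      have h3 := psum_le_self a (max k (max Na Nb))
      have h4 := psum_le_self b (max k (max Na Nb))
      rw [hsup] at h1
      omega
    · exfalso; simp [phi, Ba, Bb, Za, Zb] at h
    · exfalso; simp [phi, Ba, Bb, Za, Zb] at h
    · exact transGen_of_unbdd a b Ba Za Bb Zb

/-! ### Infinitely many classes -/

/-- A sequence with exactly `n` ones. -/
def sq (n : ℕ) : ℕ → Bool := fun i => decide (1 ≤ i ∧ i ≤ n)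

lemma psum_sq (n K : ℕ) : psum (sq n) K = min K n := by
  induction K with
  | zero => simp [psum_zero]
  | succ K ih =>
    rw [psum_succ, ih]
    by_cases h : K + 1 ≤ n
    · have : sq n (K + 1) = true := by simp [sq]; omega
      rw [this]; simp; omega
    · have : sq n (K + 1) = false := by simp [sq]; omega
      rw [this]; simp; omega

lemma phi_sq (n : ℕ) : phi (sq n) = .inl n := by
  have hb : BddAbove (Set.range (psum (sq n))) := by
    refine ⟨n, ?_⟩
    rintro x ⟨k, rfl⟩
    rw [psum_sq]; omega
  have hsup : (⨆ k, psum (sq n) k) = n := by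
    apply le_antisymm
    · apply ciSup_le; intro k; rw [psum_sq]; omega
    · have := le_ciSup hb n
      rwa [psum_sq, min_self] at this
  simp [phi, hb, hsup]

/-! ### `agree` is the same relation as `sim` -/

lemma agree_eq_sim : agree = sim := by
  funext a b
  apply propext
  constructor
  · rintro ⟨Λ, hinf, hΛ⟩ k
    obtain ⟨m, hm, hlt⟩ := hinf.exists_gt k
    exact ⟨m, hlt.le, hΛ m hm⟩
  · intro h
    refine ⟨{K | psum a K = psum b K}, ?_, fun l hl => hl⟩
    intro hfin
    obtain ⟨n, hn⟩ := hfin.bddAbove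
    obtain ⟨K, hK, he⟩ := h (n + 1)
    have := hn he
    omega

/-- Theorem 4.14. Let `∼'` (resp. the transitive closure of the `agree`
relation) be the transitive closure of `∼` on `{0,1}^ℕ`. Then the quotient
`{0,1}^ℕ/∼'` is countably infinite; consequently there are countably many distinct
constructions of Mislin completions of the form `(T_a^•, δ̃_a^•)`, where two
constructions agree exactly as encoded by the relation `agree`. -/
theorem countably_many_constructions :
    Nonempty (Quot (Relation.TransGen sim) ≃ ℕ) ∧
    Nonempty (Quot (Relation.TransGen agree) ≃ ℕ) := by
  have main : Nonempty (Quot (Relation.TransGen sim) ≃ ℕ) := by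
    have hresp : ∀ a b, Relation.TransGen sim a b → phi a = phi b := by
      intro a b h
      induction h with
      | single h => exact phi_sim h
      | tail _ h2 ih => exact ih.trans (phi_sim h2)
    set Φ : Quot (Relation.TransGen sim) → ℕ ⊕ ℕ ⊕ Unit := Quot.lift phi hresp with hΦ
    have hinj : Function.Injective Φ := by
      intro x y
      obtain ⟨a, rfl⟩ := Quot.exists_rep x
      obtain ⟨b, rfl⟩ := Quot.exists_rep y
      intro h
      exact Quot.sound (transGen_of_phi_eq h)
    haveI : Countable (Quot (Relation.TransGen sim)) := hinj.countable
    haveI : Infinite (Quot (Relation.TransGen sim)) := by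
      apply Infinite.of_injective (fun n => Quot.mk (Relation.TransGen sim) (sq n))
      intro n m h
      have := congrArg Φ h
      simp only [hΦ, Quot.lift_mk, phi_sq] at this
      exact Sum.inl.inj this
    obtain ⟨d⟩ := nonempty_denumerable_iff.mpr ⟨‹_›, ‹_›⟩
    exact ⟨@Denumerable.eqv _ d⟩
  refine ⟨main, ?_⟩
  rw [agree_eq_sim]
  exact main

end Mislin
end
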